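/- arXiv:2402.18247 — 6 statements merged into one kernel-verified Lean document; each statement's English description precedes it below -/
import Mathlib

section
/- Let a,d be weakly or strongly degenerate at 0 with degeneracy constants K_a, K_d, let b ∈ C⁰[0,1] with b/a ∈ L¹(0,1), and let η(x) = exp(∫_{1/2}^x b(s)/a(s) ds) and σ = a/η. Then the best constant C_HP in the Hardy–Poincaré inequality ∫₀¹ u²/(σ d) dx ≤ C_HP ∫₀¹ η (u')² dx (for u ∈ H¹ with weighted integrability and u(0)=u(1)=0) satisfies C_HP ≤ 4·max_{[0,1]} η / (a(1) d(1) min_{[0,1]} η), provided K_a + K_d ≤ 2. -/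
open Set MeasureTheory

/-- A function `g` is weakly or strongly degenerate at `0` with degeneracy
constant `K`: continuous on `[0,1]`, `C¹` on `(0,1]`, `g 0 = 0`, `g > 0`
on `(0,1]`, and `sup_{(0,1]} x |g'| / g = K ∈ (0,2)`. -/
def IsDegen (g : ℝ → ℝ) (K : ℝ) : Prop :=
  ContinuousOn g (Set.Icc 0 1) ∧ g 0 = 0 ∧
  (∀ x ∈ Set.Ioc (0:ℝ) 1, 0 < g x) ∧
  (∀ x ∈ Set.Ioc (0:ℝ) 1, DifferentiableAt ℝ g x) ∧
  IsLUB {r : ℝ | ∃ x ∈ Set.Ioc (0:ℝ) 1, r = x * |deriv g x| / g x} K ∧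
  0 < K ∧ K < 2

/-!
Since `x g' ≤ K g`, the function `g x * x ^ (-K)` is nonincreasing on `(0, 1]`, so
`g x ≥ g 1 * x ^ K`; with `K_a + K_d ≤ 2` this gives `σ d ≥ a(1) d(1) x² / max η`. Together with
`η ≥ min η`, the bound reduces to Hardy's inequality `∫ u² / x² ≤ 4 ∫ u'²`. That one follows from
the Cauchy–Schwarz estimate `u(x)² ≤ 2 √x ∫₀ˣ √t u'(t)² dt` and Tonelli's theorem, because
`∫ₜ^∞ x^(-3/2) dx = 2 / √t`.
-/

open intervalIntegral
open scoped ENNReal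

theorem mul_rpow_le_of_mul_deriv_le {g : ℝ → ℝ} {K x : ℝ}
    (hg : ∀ y ∈ Ioc (0:ℝ) 1, DifferentiableAt ℝ g y)
    (hK : ∀ y ∈ Ioc (0:ℝ) 1, y * deriv g y ≤ K * g y) (hx : x ∈ Ioc (0:ℝ) 1) :
    g 1 * x ^ K ≤ g x := by
  have hderiv : ∀ y ∈ Icc x 1, HasDerivAt (fun y => g y * y ^ (-K))
      (y ^ (-K - 1) * (y * deriv g y - K * g y)) y := by
    intro y hy
    have hy0 : 0 < y := hx.1.trans_le hy.1
    refine ((hg y ⟨hy0, hy.2⟩).hasDerivAt.mul (Real.hasDerivAt_rpow_const (p := -K)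
      (Or.inl hy0.ne'))).congr_deriv ?_
    rw [Real.rpow_sub_one hy0.ne']
    field_simp
    ring
  have hanti : AntitoneOn (fun y => g y * y ^ (-K)) (Icc x 1) := by
    refine antitoneOn_of_deriv_nonpos (convex_Icc x 1)
      (fun y hy => (hderiv y hy).continuousAt.continuousWithinAt)
      (fun y hy => (hderiv y (interior_subset hy)).differentiableAt.differentiableWithinAt)
      (fun y hy => ?_)
    rw [interior_Icc] at hy
    have hy0 : 0 < y := hx.1.trans hy.1
    rw [(hderiv y (Ioo_subset_Icc_self hy)).deriv]
    exact mul_nonpos_of_nonneg_of_nonpos (Real.rpow_nonneg hy0.le _)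
      (sub_nonpos.2 (hK y ⟨hy0, hy.2.le⟩))
  have h := hanti ⟨le_rfl, hx.2⟩ ⟨hx.2, le_rfl⟩ hx.2
  dsimp only at h
  rwa [Real.one_rpow, mul_one, Real.rpow_neg hx.1.le, ← div_eq_mul_inv,
    le_div_iff₀ (Real.rpow_pos_of_pos hx.1 K)] at h

namespace IsDegen

variable {g : ℝ → ℝ} {K x : ℝ}

theorem pos (h : IsDegen g K) (hx : x ∈ Ioc (0:ℝ) 1) : 0 < g x := h.2.2.1 x hx

theorem mul_rpow_le (h : IsDegen g K) (hx : x ∈ Ioc (0:ℝ) 1) : g 1 * x ^ K ≤ g x := by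
  refine mul_rpow_le_of_mul_deriv_le h.2.2.2.1 (fun y hy => ?_) hx
  have hlub := h.2.2.2.2.1.1 ⟨y, hy, rfl⟩
  rw [div_le_iff₀ (h.pos hy)] at hlub
  exact (mul_le_mul_of_nonneg_left (le_abs_self _) hy.1.le).trans hlub

theorem mul_mul_sq_le {d : ℝ → ℝ} {Kd : ℝ} (hg : IsDegen g K) (hd : IsDegen d Kd)
    (hsum : K + Kd ≤ 2) (hx : x ∈ Ioc (0:ℝ) 1) : g 1 * d 1 * x ^ 2 ≤ g x * d x := by
  have hg1 := hg.pos (right_mem_Ioc.2 zero_lt_one)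
  have hd1 := hd.pos (right_mem_Ioc.2 zero_lt_one)
  calc g 1 * d 1 * x ^ 2 ≤ g 1 * d 1 * (x ^ K * x ^ Kd) := by
        gcongr
        rw [← Real.rpow_add hx.1, ← Real.rpow_natCast]
        exact Real.rpow_le_rpow_of_exponent_ge hx.1 hx.2 (by push_cast; exact hsum)
    _ = (g 1 * x ^ K) * (d 1 * x ^ Kd) := by ring
    _ ≤ g x * d x := mul_le_mul (hg.mul_rpow_le hx) (hd.mul_rpow_le hx)
        (mul_nonneg hd1.le (Real.rpow_nonneg hx.1.le _)) (hg.pos hx).le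

end IsDegen

theorem lintegral_Ioo_rpow_neg_half {x : ℝ} (hx : 0 < x) :
    ∫⁻ t in Ioo 0 x, ENNReal.ofReal (t ^ (-(1/2) : ℝ)) = ENNReal.ofReal (2 * x ^ (1/2 : ℝ)) := by
  have hint : IntervalIntegrable (fun t : ℝ => t ^ (-(1/2) : ℝ)) volume 0 x :=
    intervalIntegrable_rpow' (by norm_num)
  rw [intervalIntegrable_iff_integrableOn_Ioo_of_le hx.le] at hint
  rw [← ofReal_integral_eq_lintegral_ofReal hint
    ((ae_restrict_iff' measurableSet_Ioo).2 (ae_of_all _ fun t ht => Real.rpow_nonneg ht.1.le _)),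
    ← integral_Ioc_eq_integral_Ioo, ← integral_of_le hx.le, integral_rpow (Or.inl (by norm_num)),
    Real.zero_rpow (by norm_num)]
  congr 1
  norm_num
  ring

theorem lintegral_Ioi_rpow_neg_three_halves {t : ℝ} (ht : 0 < t) :
    ∫⁻ x in Ioi t, ENNReal.ofReal (x ^ (-(3/2) : ℝ)) = ENNReal.ofReal (2 * t ^ (-(1/2) : ℝ)) := by
  rw [← ofReal_integral_eq_lintegral_ofReal (integrableOn_Ioi_rpow_of_lt (by norm_num) ht)
    ((ae_restrict_iff' measurableSet_Ioi).2 (ae_of_all _ fun x hx =>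
      Real.rpow_nonneg (ht.trans hx).le _)), integral_Ioi_rpow_of_lt (by norm_num) ht]
  congr 1
  norm_num
  ring

theorem ofReal_sq_le_mul_lintegral {u u' : ℝ → ℝ} {x : ℝ} (hx : 0 < x)
    (hu : ContinuousOn u (Icc 0 x)) (hu0 : u 0 = 0)
    (hd : ∀ t ∈ Ioo 0 x, HasDerivAt u (u' t) t) (hu' : IntegrableOn u' (Ioo 0 x)) :
    ENNReal.ofReal (u x ^ 2) ≤ ENNReal.ofReal (2 * x ^ (1/2 : ℝ)) *
      ∫⁻ t in Ioo 0 x, ENNReal.ofReal (t ^ (1/2 : ℝ) * u' t ^ 2) := by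
  have hftc : u x = ∫ t in Ioo 0 x, u' t := by
    rw [← integral_Ioc_eq_integral_Ioo, ← integral_of_le hx.le,
      integral_eq_sub_of_hasDeriv_right_of_le hx.le hu
        (fun t ht => (hd t ht).hasDerivWithinAt)
        ((intervalIntegrable_iff_integrableOn_Ioo_of_le hx.le).2 hu'), hu0, sub_zero]
  have habs : ENNReal.ofReal |u x| ≤ ∫⁻ t in Ioo 0 x, ENNReal.ofReal |u' t| := by
    simp_rw [← Real.enorm_eq_ofReal_abs]
    rw [hftc]
    exact enorm_integral_le_lintegral_enorm _
  have hsplit : ∀ t ∈ Ioo 0 x, ENNReal.ofReal |u' t| =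
      ENNReal.ofReal (t ^ (-(1/2) : ℝ)) ^ (1/2 : ℝ) *
        ENNReal.ofReal (t ^ (1/2 : ℝ) * u' t ^ 2) ^ (1/2 : ℝ) := by
    intro t ht
    rw [← ENNReal.mul_rpow_of_nonneg _ _ (by norm_num), ← ENNReal.ofReal_mul
      (Real.rpow_nonneg ht.1.le _), ← mul_assoc, ← Real.rpow_add ht.1]
    norm_num
    rw [ENNReal.ofReal_rpow_of_nonneg (sq_nonneg _) (by norm_num), ← Real.sqrt_eq_rpow,
      Real.sqrt_sq_eq_abs]
  have hCS := ENNReal.lintegral_mul_norm_pow_le (μ := volume.restrict (Ioo 0 x))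
    (f := fun t => ENNReal.ofReal (t ^ (-(1/2) : ℝ)))
    (g := fun t => ENNReal.ofReal (t ^ (1/2 : ℝ) * u' t ^ 2)) (by fun_prop)
    (by have := hu'.aemeasurable; fun_prop) (p := 1/2) (q := 1/2)
    (by norm_num) (by norm_num) (by norm_num)
  rw [← setLIntegral_congr_fun measurableSet_Ioo hsplit, lintegral_Ioo_rpow_neg_half hx] at hCS
  calc ENNReal.ofReal (u x ^ 2) = ENNReal.ofReal |u x| ^ 2 := by
        rw [← ENNReal.ofReal_pow (abs_nonneg _), sq_abs]
    _ ≤ (ENNReal.ofReal (2 * x ^ (1/2 : ℝ)) ^ (1/2 : ℝ) *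
          (∫⁻ t in Ioo 0 x, ENNReal.ofReal (t ^ (1/2 : ℝ) * u' t ^ 2)) ^ (1/2 : ℝ)) ^ 2 := by
        gcongr
        exact habs.trans hCS
    _ = _ := by
        rw [mul_pow, ← ENNReal.rpow_natCast, ← ENNReal.rpow_natCast, ← ENNReal.rpow_mul,
          ← ENNReal.rpow_mul]
        norm_num

theorem ofReal_sq_div_sq_le_mul_lintegral {u u' : ℝ → ℝ} {x : ℝ} (hx : 0 < x)
    (hu : ContinuousOn u (Icc 0 x)) (hu0 : u 0 = 0)
    (hd : ∀ t ∈ Ioo 0 x, HasDerivAt u (u' t) t) (hu' : IntegrableOn u' (Ioo 0 x)) :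
    ENNReal.ofReal (u x ^ 2 / x ^ 2) ≤ 2 * (ENNReal.ofReal (x ^ (-(3/2) : ℝ)) *
      ∫⁻ t in Ioo 0 x, ENNReal.ofReal (t ^ (1/2 : ℝ) * u' t ^ 2)) := by
  have hpow : 2 * x ^ (1/2 : ℝ) * (x ^ 2)⁻¹ = 2 * x ^ (-(3/2) : ℝ) := by
    rw [← Real.rpow_natCast, ← Real.rpow_neg hx.le, mul_assoc, ← Real.rpow_add hx]
    norm_num
  calc ENNReal.ofReal (u x ^ 2 / x ^ 2)
      = ENNReal.ofReal (u x ^ 2) * ENNReal.ofReal (x ^ 2)⁻¹ := by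
        rw [div_eq_mul_inv, ENNReal.ofReal_mul (sq_nonneg _)]
    _ ≤ ENNReal.ofReal (2 * x ^ (1/2 : ℝ)) *
          (∫⁻ t in Ioo 0 x, ENNReal.ofReal (t ^ (1/2 : ℝ) * u' t ^ 2)) *
          ENNReal.ofReal (x ^ 2)⁻¹ := by
        gcongr
        exact ofReal_sq_le_mul_lintegral hx hu hu0 hd hu'
    _ = _ := by
        rw [mul_right_comm, ← ENNReal.ofReal_mul
          (mul_nonneg zero_le_two (Real.rpow_nonneg hx.le _)), hpow,
          ENNReal.ofReal_mul zero_le_two, ENNReal.ofReal_ofNat]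
        ring

theorem setLIntegral_Ioo_mul_setLIntegral_Ioo_swap {f g : ℝ → ℝ≥0∞} {c : ℝ}
    (hf : AEMeasurable f (volume.restrict (Ioo 0 c)))
    (hg : AEMeasurable g (volume.restrict (Ioo 0 c))) :
    ∫⁻ x in Ioo 0 c, f x * ∫⁻ t in Ioo 0 x, g t =
      ∫⁻ t in Ioo 0 c, g t * ∫⁻ x in Ioo t c, f x := by
  set F : ℝ → ℝ → ℝ≥0∞ := fun x t =>
    {p : ℝ × ℝ | p.2 ∈ Ioo 0 p.1}.indicator (fun p => f p.1 * g p.2) (x, t)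
  have hF : AEMeasurable (Function.uncurry F)
      ((volume.restrict (Ioo 0 c)).prod (volume.restrict (Ioo 0 c))) :=
    (hf.comp_fst.mul hg.comp_snd).indicator
      ((measurableSet_lt measurable_const measurable_snd).inter
        (measurableSet_lt measurable_snd measurable_fst))
  have hslice_x : ∀ x ∈ Ioo 0 c, ∫⁻ t in Ioo 0 c, F x t = f x * ∫⁻ t in Ioo 0 x, g t := by
    intro x hx
    have hsub : Ioo 0 x ⊆ Ioo 0 c := Ioo_subset_Ioo_right hx.2.le
    calc ∫⁻ t in Ioo 0 c, F x t = ∫⁻ t in Ioo 0 c, (Ioo 0 x).indicator (fun t => f x * g t) t :=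
          setLIntegral_congr_fun measurableSet_Ioo fun t _ => by simp [F, indicator_apply]
      _ = f x * ∫⁻ t in Ioo 0 x, g t := by
          rw [lintegral_indicator measurableSet_Ioo, Measure.restrict_restrict measurableSet_Ioo,
            inter_eq_left.2 hsub,
            lintegral_const_mul'' _ (hg.mono_measure (Measure.restrict_mono hsub le_rfl))]
  have hslice_t : ∀ t ∈ Ioo 0 c, ∫⁻ x in Ioo 0 c, F x t = g t * ∫⁻ x in Ioo t c, f x := by
    intro t ht
    have hsub : Ioo t c ⊆ Ioo 0 c := Ioo_subset_Ioo_left ht.1.le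
    calc ∫⁻ x in Ioo 0 c, F x t = ∫⁻ x in Ioo 0 c, (Ioo t c).indicator (fun x => f x * g t) x :=
          setLIntegral_congr_fun measurableSet_Ioo fun x hx => by
            simp [F, indicator_apply, ht.1, hx.2]
      _ = g t * ∫⁻ x in Ioo t c, f x := by
          rw [lintegral_indicator measurableSet_Ioo, Measure.restrict_restrict measurableSet_Ioo,
            inter_eq_left.2 hsub,
            lintegral_mul_const'' _ (hf.mono_measure (Measure.restrict_mono hsub le_rfl)), mul_comm]
  calc ∫⁻ x in Ioo 0 c, f x * ∫⁻ t in Ioo 0 x, g t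
      = ∫⁻ x in Ioo 0 c, ∫⁻ t in Ioo 0 c, F x t :=
        (setLIntegral_congr_fun measurableSet_Ioo hslice_x).symm
    _ = ∫⁻ t in Ioo 0 c, ∫⁻ x in Ioo 0 c, F x t := lintegral_lintegral_swap hF
    _ = ∫⁻ t in Ioo 0 c, g t * ∫⁻ x in Ioo t c, f x :=
        setLIntegral_congr_fun measurableSet_Ioo hslice_t

theorem lintegral_sq_div_sq_le_four_mul {u u' : ℝ → ℝ} {c : ℝ} (hu : ContinuousOn u (Ico 0 c))
    (hu0 : u 0 = 0) (hd : ∀ x ∈ Ioo 0 c, HasDerivAt u (u' x) x)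
    (hu' : MemLp u' 2 (volume.restrict (Ioo 0 c))) :
    ∫⁻ x in Ioo 0 c, ENNReal.ofReal (u x ^ 2 / x ^ 2) ≤
      4 * ∫⁻ x in Ioo 0 c, ENNReal.ofReal (u' x ^ 2) := by
  have hint : IntegrableOn u' (Ioo 0 c) := hu'.integrable one_le_two
  set g : ℝ → ℝ≥0∞ := fun t => ENNReal.ofReal (t ^ (1/2 : ℝ) * u' t ^ 2)
  have htail : ∀ t ∈ Ioo 0 c,
      g t * ∫⁻ x in Ioo t c, ENNReal.ofReal (x ^ (-(3/2) : ℝ)) ≤ 2 * ENNReal.ofReal (u' t ^ 2) := by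
    intro t ht
    have hcancel : t ^ (1/2 : ℝ) * t ^ (-(1/2) : ℝ) = 1 := by
      rw [← Real.rpow_add ht.1]; norm_num
    calc g t * ∫⁻ x in Ioo t c, ENNReal.ofReal (x ^ (-(3/2) : ℝ))
        ≤ g t * ENNReal.ofReal (2 * t ^ (-(1/2) : ℝ)) := by
          rw [← lintegral_Ioi_rpow_neg_three_halves ht.1]
          gcongr
          exact Ioo_subset_Ioi_self
      _ = 2 * ENNReal.ofReal (u' t ^ 2) := by
          rw [← ENNReal.ofReal_mul (mul_nonneg (Real.rpow_nonneg ht.1.le _) (sq_nonneg _)),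
            ← ENNReal.ofReal_ofNat 2, ← ENNReal.ofReal_mul zero_le_two]
          congr 1
          linear_combination (2 * u' t ^ 2) * hcancel
  calc ∫⁻ x in Ioo 0 c, ENNReal.ofReal (u x ^ 2 / x ^ 2)
      ≤ ∫⁻ x in Ioo 0 c, 2 * (ENNReal.ofReal (x ^ (-(3/2) : ℝ)) * ∫⁻ t in Ioo 0 x, g t) :=
        setLIntegral_mono' measurableSet_Ioo fun x hx =>
          ofReal_sq_div_sq_le_mul_lintegral hx.1 (hu.mono (Icc_subset_Ico_right hx.2)) hu0
            (fun t ht => hd t ⟨ht.1, ht.2.trans hx.2⟩)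
            (hint.mono_set (Ioo_subset_Ioo_right hx.2.le))
    _ = 2 * ∫⁻ t in Ioo 0 c, g t * ∫⁻ x in Ioo t c, ENNReal.ofReal (x ^ (-(3/2) : ℝ)) := by
        have hu'm := hint.aemeasurable
        rw [lintegral_const_mul' _ _ ENNReal.ofNat_ne_top,
          setLIntegral_Ioo_mul_setLIntegral_Ioo_swap (by fun_prop) (by fun_prop)]
    _ ≤ 2 * ∫⁻ t in Ioo 0 c, 2 * ENNReal.ofReal (u' t ^ 2) := by
        gcongr 1
        exact setLIntegral_mono' measurableSet_Ioo htail
    _ = 4 * ∫⁻ x in Ioo 0 c, ENNReal.ofReal (u' x ^ 2) := by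
        rw [lintegral_const_mul' _ _ ENNReal.ofNat_ne_top, ← mul_assoc]
        norm_num

theorem integral_le_of_lintegral_ofReal_le {α : Type*} [MeasurableSpace α] {μ : Measure α}
    {f : α → ℝ} {R : ℝ} (hR : 0 ≤ R) (hf : 0 ≤ᵐ[μ] f)
    (h : ∫⁻ x, ENNReal.ofReal (f x) ∂μ ≤ ENNReal.ofReal R) : ∫ x, f x ∂μ ≤ R := by
  rw [← ENNReal.ofReal_le_ofReal_iff hR]
  calc ENNReal.ofReal (∫ x, f x ∂μ) ≤ ‖∫ x, f x ∂μ‖ₑ := Real.ofReal_le_enorm _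
    _ ≤ ∫⁻ x, ‖f x‖ₑ ∂μ := enorm_integral_le_lintegral_enorm _
    _ = ∫⁻ x, ENNReal.ofReal (f x) ∂μ :=
        lintegral_congr_ae (hf.mono fun x hx => Real.enorm_eq_ofReal hx)
    _ ≤ ENNReal.ofReal R := h

theorem setLIntegral_ofReal_le_mul {f g : ℝ → ℝ} {s : Set ℝ} {k : ℝ} (hs : MeasurableSet s)
    (hk : 0 ≤ k) (h : ∀ x ∈ s, f x ≤ k * g x) :
    ∫⁻ x in s, ENNReal.ofReal (f x) ≤ ENNReal.ofReal k * ∫⁻ x in s, ENNReal.ofReal (g x) := by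
  rw [← lintegral_const_mul' _ _ ENNReal.ofReal_ne_top]
  refine setLIntegral_mono' hs fun x hx => ?_
  rw [← ENNReal.ofReal_mul hk]
  exact ENNReal.ofReal_le_ofReal (h x hx)

theorem integral_sq_div_le_of_le_weight {u u' w η : ℝ → ℝ} {c α m : ℝ} (hc : 0 ≤ c)
    (hα : 0 < α) (hm : 0 < m) (hw : ∀ x ∈ Ioo 0 c, α * x ^ 2 ≤ w x)
    (hη : ∀ x ∈ Ioo 0 c, m ≤ η x) (hu : ContinuousOn u (Ico 0 c)) (hu0 : u 0 = 0)
    (hd : ∀ x ∈ Ioo 0 c, HasDerivAt u (u' x) x)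
    (hηu' : IntegrableOn (fun x => η x * u' x ^ 2) (Ioo 0 c)) :
    ∫ x in 0..c, u x ^ 2 / w x ≤ 4 / (α * m) * ∫ x in 0..c, η x * u' x ^ 2 := by
  have hu'2 : ∀ x ∈ Ioo 0 c, u' x ^ 2 ≤ m⁻¹ * (η x * u' x ^ 2) := fun x hx => by
    rw [le_inv_mul_iff₀ hm]
    exact mul_le_mul_of_nonneg_right (hη x hx) (sq_nonneg _)
  have hηu'_nonneg : ∀ x ∈ Ioo 0 c, 0 ≤ η x * u' x ^ 2 := fun x hx =>
    mul_nonneg (hm.le.trans (hη x hx)) (sq_nonneg _)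
  have hmeas : AEStronglyMeasurable u' (volume.restrict (Ioo 0 c)) :=
    (aestronglyMeasurable_deriv u _).congr
      ((ae_restrict_iff' measurableSet_Ioo).2 (ae_of_all _ fun x hx => (hd x hx).deriv))
  have hL2 : MemLp u' 2 (volume.restrict (Ioo 0 c)) := by
    refine (memLp_two_iff_integrable_sq hmeas).2 (Integrable.mono' (hηu'.const_mul m⁻¹)
      (hmeas.pow 2) ((ae_restrict_iff' measurableSet_Ioo).2 (ae_of_all _ fun x hx => ?_)))
    rw [Real.norm_eq_abs, abs_of_nonneg (sq_nonneg _)]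
    exact hu'2 x hx
  rw [integral_of_le hc, integral_of_le hc, integral_Ioc_eq_integral_Ioo,
    integral_Ioc_eq_integral_Ioo]
  have hI := setIntegral_nonneg (μ := volume) measurableSet_Ioo hηu'_nonneg
  refine integral_le_of_lintegral_ofReal_le (by positivity)
    ((ae_restrict_iff' measurableSet_Ioo).2 (ae_of_all _ fun x hx =>
      div_nonneg (sq_nonneg _) ((by positivity : 0 ≤ α * x ^ 2).trans (hw x hx)))) ?_
  calc ∫⁻ x in Ioo 0 c, ENNReal.ofReal (u x ^ 2 / w x)
      ≤ ENNReal.ofReal α⁻¹ * ∫⁻ x in Ioo 0 c, ENNReal.ofReal (u x ^ 2 / x ^ 2) := by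
        refine setLIntegral_ofReal_le_mul measurableSet_Ioo (by positivity) fun x hx => ?_
        rw [← mul_div_assoc, inv_mul_eq_div, div_div]
        exact div_le_div_of_nonneg_left (sq_nonneg _) (by have := hx.1; positivity) (hw x hx)
    _ ≤ ENNReal.ofReal α⁻¹ * (4 * (ENNReal.ofReal m⁻¹ *
          ∫⁻ x in Ioo 0 c, ENNReal.ofReal (η x * u' x ^ 2))) := by
        gcongr
        exact (lintegral_sq_div_sq_le_four_mul hu hu0 hd hL2).trans
          (by gcongr; exact setLIntegral_ofReal_le_mul measurableSet_Ioo (by positivity) hu'2)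
    _ = ENNReal.ofReal (4 / (α * m) * ∫ x in Ioo 0 c, η x * u' x ^ 2) := by
        rw [← ofReal_integral_eq_lintegral_ofReal hηu'
          ((ae_restrict_iff' measurableSet_Ioo).2 (ae_of_all _ hηu'_nonneg)),
          ← ENNReal.ofReal_mul (by positivity), ← ENNReal.ofReal_ofNat 4,
          ← ENNReal.ofReal_mul (by positivity), ← ENNReal.ofReal_mul (by positivity)]
        congr 1
        field_simp

theorem statement3_general (a b d : ℝ → ℝ) (Ka Kd : ℝ)
    (hdega : IsDegen a Ka) (hdegd : IsDegen d Kd)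
    (hba : IntegrableOn (fun x => b x / a x) (Ioo 0 1))
    (hsum : Ka + Kd ≤ 2)
    (η σ : ℝ → ℝ)
    (hη : ∀ x, η x = Real.exp (∫ s in (1/2:ℝ)..x, b s / a s))
    (hσ : ∀ x, σ x = a x / η x) :
    sInf {C : ℝ | 0 ≤ C ∧ ∀ u u' : ℝ → ℝ,
        (∀ x ∈ Ioo (0:ℝ) 1, HasDerivAt u (u' x) x) →
        ContinuousOn u (Icc 0 1) → u 0 = 0 → u 1 = 0 →
        IntegrableOn (fun x => u x ^ 2 / σ x) (Ioo 0 1) →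
        IntegrableOn (fun x => η x * u' x ^ 2) (Ioo 0 1) →
        ∫ x in (0:ℝ)..1, u x ^ 2 / (σ x * d x) ≤
          C * ∫ x in (0:ℝ)..1, η x * u' x ^ 2}
      ≤ 4 * sSup (η '' Icc 0 1) / (a 1 * d 1 * sInf (η '' Icc 0 1)) := by
  have hη_pos : ∀ x, 0 < η x := fun x => (hη x).symm ▸ Real.exp_pos _
  have hη_cont : ContinuousOn η (Icc 0 1) := by
    rw [funext hη, ← uIcc_of_le zero_le_one]
    exact Real.continuous_exp.comp_continuousOn (continuousOn_primitive_interval'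
      ((intervalIntegrable_iff_integrableOn_Ioo_of_le zero_le_one).2 hba)
      (by rw [uIcc_of_le zero_le_one]; norm_num))
  set M := sSup (η '' Icc 0 1)
  set m := sInf (η '' Icc 0 1)
  have hm : 0 < m := by
    obtain ⟨x, -, hx⟩ := (isCompact_Icc.image_of_continuousOn hη_cont).sInf_mem
      ((nonempty_Icc.2 zero_le_one).image η)
    exact (hη_pos x).trans_eq hx
  have ha1 := hdega.pos (right_mem_Ioc.2 zero_lt_one)
  have hd1 := hdegd.pos (right_mem_Ioc.2 zero_lt_one)
  have hM : 0 < M := hm.trans_le ((hη_cont.sInf_image_Icc_le (left_mem_Icc.2 zero_le_one)).trans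
    (hη_cont.le_sSup_image_Icc (left_mem_Icc.2 zero_le_one)))
  have hw : ∀ x ∈ Ioo (0:ℝ) 1, a 1 * d 1 / M * x ^ 2 ≤ σ x * d x := fun x hx => by
    rw [hσ, div_mul_eq_mul_div, div_mul_eq_mul_div]
    exact div_le_div₀ (mul_pos (hdega.pos ⟨hx.1, hx.2.le⟩) (hdegd.pos ⟨hx.1, hx.2.le⟩)).le
      (hdega.mul_mul_sq_le hdegd hsum ⟨hx.1, hx.2.le⟩) (hη_pos x)
      (hη_cont.le_sSup_image_Icc (Ioo_subset_Icc_self hx))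
  refine csInf_le ⟨0, fun C hC => hC.1⟩ ⟨by positivity, fun u u' hd hu hu0 _ _ hηu' => ?_⟩
  convert integral_sq_div_le_of_le_weight zero_le_one (by positivity) hm hw
    (fun x hx => hη_cont.sInf_image_Icc_le (Ioo_subset_Icc_self hx))
    (hu.mono Ico_subset_Icc_self) hu0 hd hηu' using 2
  field_simp

/-- bound for the best Hardy–Poincaré constant
`C_HP ≤ 4 max η / (a(1) d(1) min η)` provided `K_a + K_d ≤ 2`, where
`η(x) = exp ∫_{1/2}^x b/a` and `σ = a/η`. -/
theorem statement3 (a b d : ℝ → ℝ) (Ka Kd : ℝ)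
    (hdega : IsDegen a Ka) (hdegd : IsDegen d Kd)
    (hb_cont : ContinuousOn b (Icc 0 1))
    (hba : IntegrableOn (fun x => b x / a x) (Ioo 0 1))
    (hsum : Ka + Kd ≤ 2)
    (η σ : ℝ → ℝ)
    (hη : ∀ x, η x = Real.exp (∫ s in (1/2:ℝ)..x, b s / a s))
    (hσ : ∀ x, σ x = a x / η x) :
    sInf {C : ℝ | 0 ≤ C ∧ ∀ u u' : ℝ → ℝ,
        (∀ x ∈ Ioo (0:ℝ) 1, HasDerivAt u (u' x) x) →
        ContinuousOn u (Icc 0 1) → u 0 = 0 → u 1 = 0 →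
        IntegrableOn (fun x => u x ^ 2 / σ x) (Ioo 0 1) →
        IntegrableOn (fun x => η x * u' x ^ 2) (Ioo 0 1) →
        ∫ x in (0:ℝ)..1, u x ^ 2 / (σ x * d x) ≤
          C * ∫ x in (0:ℝ)..1, η x * u' x ^ 2}
      ≤ 4 * sSup (η '' Icc 0 1) / (a 1 * d 1 * sInf (η '' Icc 0 1)) :=
  statement3_general a b d Ka Kd hdega hdegd hba hsum η σ hη hσ
end

section
/- Under the degeneracy assumptions on a, b, d, and for λ < 1/C_HP, the norms ‖u‖²_{1,1/σ} = ∫₀¹ u²/σ + ∫₀¹ η(u')², ‖u‖₁² = ∫₀¹ u²/σ + ∫₀¹ η(u')² − λ∫₀¹ u²/(σd), ‖u‖²_{1,∘} = ∫₀¹ (u')², and ‖u‖²_{1,•} = ∫₀¹ η(u')² are pairwise equivalent on H¹_{1/σ}(0,1) = L²_{1/σ}(0,1) ∩ H¹₀(0,1). -/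
/-!
Because `b / a` is integrable, the weight `η = exp (∫ b / a)` is pinched between two positive
constants on `(0,1)`, so `∫ η (u')²` and `∫ (u')²` are comparable. Since `u 0 = 0`,
Cauchy–Schwarz gives `u(x)² ≤ x ∫ (u')²`, while the monotonicity of `x ^ K₁ / a` gives
`σ ≳ x ^ K₁`; as `K₁ < 2` the weight `x ^ (1 - K₁)` is integrable, whence `∫ u² / σ ≲ ∫ (u')²`.
Finally the Hardy–Poincaré inequality and `λ C_HP < 1` make `‖·‖₁` comparable to `‖·‖_{1,1/σ}`.
-/

open Set MeasureTheory

lemma sq_setIntegral_le_measureReal_mul_setIntegral_sq {α : Type*} [MeasurableSpace α]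
    {μ : Measure α} {s : Set α} {f : α → ℝ} (h₀ : μ s ≠ 0) (hfin : μ s ≠ ⊤)
    (hf : IntegrableOn f s μ) (hf₂ : IntegrableOn (fun t => f t ^ 2) s μ) :
    (∫ t in s, f t ∂μ) ^ 2 ≤ μ.real s * ∫ t in s, f t ^ 2 ∂μ := by
  have jensen := (even_two.convexOn_pow (𝕜 := ℝ)).map_set_average_le
    (continuous_pow 2).continuousOn isClosed_univ h₀ hfin (by simp) hf hf₂
  simp only [setAverage_eq, smul_eq_mul] at jensen
  have hm : 0 < μ.real s := ENNReal.toReal_pos h₀ hfin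
  calc (∫ t in s, f t ∂μ) ^ 2 = μ.real s ^ 2 * ((μ.real s)⁻¹ * ∫ t in s, f t ∂μ) ^ 2 := by
        field_simp
    _ ≤ μ.real s ^ 2 * ((μ.real s)⁻¹ * ∫ t in s, f t ^ 2 ∂μ) := by gcongr
    _ = μ.real s * ∫ t in s, f t ^ 2 ∂μ := by field_simp

lemma integrableOn_of_hasDerivAt_of_integrableOn_sq {u u' : ℝ → ℝ} {s : Set ℝ}
    (hs : MeasurableSet s) (hs_fin : volume s ≠ ⊤) (hu : ∀ x ∈ s, HasDerivAt u (u' x) x)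
    (hu' : IntegrableOn (fun x => u' x ^ 2) s) : IntegrableOn u' s := by
  have : IsFiniteMeasure (volume.restrict s) := isFiniteMeasure_restrict.2 hs_fin
  have hmeas : AEStronglyMeasurable u' (volume.restrict s) :=
    (measurable_deriv u).aestronglyMeasurable.congr <| by
      filter_upwards [ae_restrict_mem hs] with x hx using (hu x hx).deriv
  exact ((memLp_two_iff_integrable_sq hmeas).2 hu').integrable one_le_two

lemma sq_le_mul_setIntegral_sq_deriv {u u' : ℝ → ℝ}
    (hu : ∀ x ∈ Ioo (0:ℝ) 1, HasDerivAt u (u' x) x) (hcont : ContinuousOn u (Icc 0 1))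
    (hu0 : u 0 = 0) (hu' : IntegrableOn (fun x => u' x ^ 2) (Ioo 0 1)) {x : ℝ}
    (hx : x ∈ Ioo (0:ℝ) 1) :
    u x ^ 2 ≤ x * ∫ t in Ioo (0:ℝ) 1, u' t ^ 2 := by
  have hsub : Ioo (0:ℝ) x ⊆ Ioo 0 1 := Ioo_subset_Ioo_right hx.2.le
  have hu'x : IntegrableOn u' (Ioo 0 x) :=
    integrableOn_of_hasDerivAt_of_integrableOn_sq measurableSet_Ioo measure_Ioo_lt_top.ne
      (fun t ht => hu t (hsub ht)) (hu'.mono_set hsub)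
  have ftc : u x = ∫ t in Ioo 0 x, u' t := by
    rw [← integral_Ioc_eq_integral_Ioo, ← intervalIntegral.integral_of_le hx.1.le,
      intervalIntegral.integral_eq_sub_of_hasDeriv_right_of_le hx.1.le
        (hcont.mono (Icc_subset_Icc_right hx.2.le))
        (fun t ht => (hu t ⟨ht.1, ht.2.trans hx.2⟩).hasDerivWithinAt)
        ((intervalIntegrable_iff_integrableOn_Ioo_of_le hx.1.le).2 hu'x), hu0, sub_zero]
  calc u x ^ 2 ≤ volume.real (Ioo 0 x) * ∫ t in Ioo 0 x, u' t ^ 2 := by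
        rw [ftc]
        exact sq_setIntegral_le_measureReal_mul_setIntegral_sq (by simp [hx.1])
          measure_Ioo_lt_top.ne hu'x (hu'.mono_set hsub)
    _ ≤ x * ∫ t in Ioo (0:ℝ) 1, u' t ^ 2 := by
        rw [Real.volume_real_Ioo_of_le hx.1.le, sub_zero]
        exact mul_le_mul_of_nonneg_left
          (setIntegral_mono_set hu' (.of_forall fun _ => sq_nonneg _) hsub.eventuallyLE) hx.1.le

lemma setIntegral_sq_div_le_of_mul_rpow_le {u u' σ : ℝ → ℝ} {c K : ℝ} (hc : 0 < c) (hK : K < 2)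
    (hσ : ∀ x ∈ Ioo (0:ℝ) 1, c * x ^ K ≤ σ x)
    (hu : ∀ x ∈ Ioo (0:ℝ) 1, u x ^ 2 ≤ x * ∫ t in Ioo (0:ℝ) 1, u' t ^ 2)
    (huσ : IntegrableOn (fun x => u x ^ 2 / σ x) (Ioo 0 1)) :
    ∫ x in Ioo (0:ℝ) 1, u x ^ 2 / σ x ≤
      (∫ x in Ioo (0:ℝ) 1, x ^ (1 - K)) / c * ∫ t in Ioo (0:ℝ) 1, u' t ^ 2 := by
  set I := ∫ t in Ioo (0:ℝ) 1, u' t ^ 2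
  have hI : 0 ≤ I := setIntegral_nonneg measurableSet_Ioo fun _ _ => sq_nonneg _
  have hpow : IntegrableOn (fun x : ℝ => x ^ (1 - K)) (Ioo 0 1) :=
    ((intervalIntegral.intervalIntegrable_rpow' (by linarith)).1).mono_set Ioo_subset_Ioc_self
  have hpt : ∀ x ∈ Ioo (0:ℝ) 1, u x ^ 2 / σ x ≤ I / c * x ^ (1 - K) := fun x hx => by
    have hxK : 0 < x ^ K := Real.rpow_pos_of_pos hx.1 K
    calc u x ^ 2 / σ x ≤ x * I / (c * x ^ K) :=
          div_le_div₀ (mul_nonneg hx.1.le hI) (hu x hx) (by positivity) (hσ x hx)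
      _ = I / c * x ^ (1 - K) := by
          rw [Real.rpow_sub hx.1, Real.rpow_one]
          field_simp
  calc ∫ x in Ioo (0:ℝ) 1, u x ^ 2 / σ x ≤ ∫ x in Ioo (0:ℝ) 1, I / c * x ^ (1 - K) :=
        setIntegral_mono_on huσ (hpow.const_mul _) measurableSet_Ioo hpt
    _ = _ := by rw [integral_const_mul]; ring

lemma exists_mul_rpow_le_of_monotoneOn {a : ℝ → ℝ} {K δ : ℝ} (hK : 0 ≤ K) (hδ : 0 < δ)
    (ha : ContinuousOn a (Icc 0 1)) (ha_pos : ∀ x ∈ Ioc (0:ℝ) 1, 0 < a x)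
    (hmono : MonotoneOn (fun x => x ^ K / a x) (Ioo 0 δ)) :
    ∃ c > 0, ∀ x ∈ Ioc (0:ℝ) 1, c * x ^ K ≤ a x := by
  set p := min δ 1 / 2
  have hp : p ∈ Ioo 0 δ := ⟨by positivity, by grind⟩
  have hp1 : p ≤ 1 := by grind
  have hap : 0 < a p := ha_pos p ⟨hp.1, hp1⟩
  obtain ⟨z, hz, hzmin⟩ := isCompact_Icc.exists_isMinOn (nonempty_Icc.2 hp1)
    (ha.mono (Icc_subset_Icc_left hp.1.le))
  have haz : 0 < a z := ha_pos z ⟨hp.1.trans_le hz.1, hz.2⟩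
  -- near `0` the monotonicity of `x ^ K / a x` gives the bound, away from `0` compactness does
  refine ⟨min (a p / p ^ K) (a z), lt_min (div_pos hap (Real.rpow_pos_of_pos hp.1 K)) haz,
    fun x hx => ?_⟩
  have hxK : 0 < x ^ K := Real.rpow_pos_of_pos hx.1 K
  rcases le_or_gt x p with hxp | hpx
  · have hratio : x ^ K / a x ≤ p ^ K / a p := hmono ⟨hx.1, hxp.trans_lt hp.2⟩ hp hxp
    rw [div_le_div_iff₀ (ha_pos x hx) hap] at hratio
    calc min (a p / p ^ K) (a z) * x ^ K ≤ a p / p ^ K * x ^ K := by gcongr; exact min_le_left _ _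
      _ ≤ a x := by
        rw [div_mul_eq_mul_div, div_le_iff₀ (Real.rpow_pos_of_pos hp.1 K)]
        linarith
  · calc min (a p / p ^ K) (a z) * x ^ K ≤ a z * 1 := by
          gcongr
          · exact min_le_right _ _
          · exact Real.rpow_le_one hx.1.le hx.2 hK
      _ ≤ a x := by rw [mul_one]; exact hzmin ⟨hpx.le, hx.2⟩

lemma abs_intervalIntegral_le_setIntegral_abs {f : ℝ → ℝ} {s : Set ℝ} {x y : ℝ}
    (hf : IntegrableOn f s) (hxy : uIoc x y ⊆ s) :
    |∫ t in x..y, f t| ≤ ∫ t in s, |f t| :=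
  intervalIntegral.norm_integral_le_integral_norm_uIoc.trans <|
    setIntegral_mono_set hf.norm (.of_forall fun _ => norm_nonneg _) hxy.eventuallyLE

lemma exp_intervalIntegral_mem_Icc {f : ℝ → ℝ} {s : Set ℝ} [s.OrdConnected]
    (hf : IntegrableOn f s) {x₀ x : ℝ} (hx₀ : x₀ ∈ s) (hx : x ∈ s) :
    Real.exp (∫ t in x₀..x, f t) ∈
      Icc (Real.exp (-∫ t in s, |f t|)) (Real.exp (∫ t in s, |f t|)) := by
  have h := abs_le.1 <| abs_intervalIntegral_le_setIntegral_abs hf <|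
    uIoc_subset_uIcc.trans (OrdConnected.uIcc_subset ‹_› hx₀ hx)
  exact ⟨Real.exp_le_exp.2 h.1, Real.exp_le_exp.2 h.2⟩

lemma continuousOn_exp_intervalIntegral {f : ℝ → ℝ} (hf : IntegrableOn f (Ioo 0 1)) {x₀ : ℝ}
    (hx₀ : x₀ ∈ Icc (0:ℝ) 1) :
    ContinuousOn (fun x => Real.exp (∫ t in x₀..x, f t)) (Icc 0 1) := by
  have hf' : IntervalIntegrable f volume 0 1 :=
    (intervalIntegrable_iff_integrableOn_Ioo_of_le zero_le_one).2 hf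
  have := intervalIntegral.continuousOn_primitive_interval' hf' (by rwa [uIcc_of_le zero_le_one])
  rw [uIcc_of_le zero_le_one] at this
  exact Real.continuous_exp.comp_continuousOn this

lemma exists_mem_Icc_inv_and_aestronglyMeasurable_of_eq_exp {f η : ℝ → ℝ}
    (hf : IntegrableOn f (Ioo 0 1)) (hη : ∀ x, η x = Real.exp (∫ t in (1/2:ℝ)..x, f t)) :
    ∃ e > 0, (∀ x ∈ Ioo (0:ℝ) 1, η x ∈ Icc e⁻¹ e) ∧
      AEStronglyMeasurable η (volume.restrict (Ioo 0 1)) := by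
  refine ⟨_, Real.exp_pos (∫ t in Ioo (0:ℝ) 1, |f t|), fun x hx => ?_, ?_⟩
  · rw [hη, ← Real.exp_neg]
    exact exp_intervalIntegral_mem_Icc hf (by norm_num) hx
  · exact (((continuousOn_exp_intervalIntegral hf (by norm_num)).mono Ioo_subset_Icc_self).congr
      fun x _ => hη x).aestronglyMeasurable measurableSet_Ioo

lemma integrableOn_mul_of_mem_Icc {α : Type*} [MeasurableSpace α] {μ : Measure α} {s : Set α}
    {w g : α → ℝ} {e₁ e₂ : ℝ} (hs : MeasurableSet s) (he₁ : 0 ≤ e₁)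
    (hw_meas : AEStronglyMeasurable w (μ.restrict s)) (hw : ∀ x ∈ s, w x ∈ Icc e₁ e₂)
    (hg : IntegrableOn g s μ) : IntegrableOn (fun x => w x * g x) s μ :=
  hg.bdd_mul hw_meas <| (ae_restrict_iff' hs).2 <| .of_forall fun x hx => by
    rw [Real.norm_eq_abs, abs_of_nonneg (he₁.trans (hw x hx).1)]
    exact (hw x hx).2

lemma setIntegral_mul_mem_Icc {α : Type*} [MeasurableSpace α] {μ : Measure α} {s : Set α}
    {w g : α → ℝ} {e₁ e₂ : ℝ} (hs : MeasurableSet s) (hg : IntegrableOn g s μ)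
    (hwg : IntegrableOn (fun x => w x * g x) s μ) (hw : ∀ x ∈ s, w x ∈ Icc e₁ e₂)
    (hg₀ : ∀ x ∈ s, 0 ≤ g x) :
    ∫ x in s, w x * g x ∂μ ∈ Icc (e₁ * ∫ x in s, g x ∂μ) (e₂ * ∫ x in s, g x ∂μ) := by
  rw [← integral_const_mul, ← integral_const_mul]
  exact ⟨setIntegral_mono_on (hg.const_mul e₁) hwg hs fun x hx =>
      mul_le_mul_of_nonneg_right (hw x hx).1 (hg₀ x hx),
    setIntegral_mono_on hwg (hg.const_mul e₂) hs fun x hx =>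
      mul_le_mul_of_nonneg_right (hw x hx).2 (hg₀ x hx)⟩

/-- `A`, `B`, `H`, `I` play the roles of `∫ u² / σ`, `∫ η (u')²`, `∫ u² / (σ d)` and `∫ (u')²`. -/
lemma exists_const_le_mul_of_bounds {κ e₁ e₂ CHP lam : ℝ} (hκ : 0 ≤ κ) (he₁ : 0 < e₁)
    (he₂ : 0 ≤ e₂) (hCHP : 0 < CHP) (hlam : lam < 1 / CHP) :
    ∃ C > 0, ∀ A B H I : ℝ, 0 ≤ A → 0 ≤ H → 0 ≤ I → A ≤ κ * I → e₁ * I ≤ B → B ≤ e₂ * I →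
      H ≤ CHP * B →
      (A + B ≤ C * (A + B - lam * H) ∧ A + B - lam * H ≤ C * (A + B)) ∧
      (A + B ≤ C * I ∧ I ≤ C * (A + B)) ∧ (A + B ≤ C * B ∧ B ≤ C * (A + B)) := by
  set θ := max lam 0 * CHP
  have hθ : θ < 1 := by
    rcases le_total lam 0 with hl | hl
    · simp [θ, max_eq_right hl]
    · rw [lt_div_iff₀ hCHP] at hlam
      simpa [θ, max_eq_left hl] using hlam
  set C := 1 / (1 - θ) + (1 + |lam| * CHP) + (κ / e₁ + 1) + (κ + e₂) + 1 / e₁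
  have hθ' : 0 < 1 / (1 - θ) := one_div_pos.2 (sub_pos.2 hθ)
  have hlamCHP : 0 ≤ |lam| * CHP := by positivity
  have hκe₁ : 0 ≤ κ / e₁ := by positivity
  have he₁' : 0 < 1 / e₁ := by positivity
  refine ⟨C, by positivity, fun A B H I hA hH hI hAI hIB hBI hHB => ?_⟩
  have hB : 0 ≤ B := (mul_nonneg he₁.le hI).trans hIB
  have widen : ∀ {X Y c : ℝ}, X ≤ c * Y → 0 ≤ Y → c ≤ C → X ≤ C * Y :=
    fun hX hY hc => hX.trans (mul_le_mul_of_nonneg_right hc hY)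
  have hI_le : I ≤ B / e₁ := by rw [le_div_iff₀ he₁]; linarith
  have hcoercive : (1 - θ) * (A + B) ≤ A + B - lam * H := by
    have : lam * H ≤ max lam 0 * (CHP * B) :=
      (mul_le_mul_of_nonneg_right (le_max_left lam 0) hH).trans
        (mul_le_mul_of_nonneg_left hHB (le_max_right lam 0))
    nlinarith [mul_nonneg (mul_nonneg (le_max_right lam 0) hCHP.le) hA]
  have hbounded : A + B - lam * H ≤ (1 + |lam| * CHP) * (A + B) := by
    have : -lam * H ≤ |lam| * (CHP * B) :=
      (mul_le_mul_of_nonneg_right (neg_le_abs lam) hH).trans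
        (mul_le_mul_of_nonneg_left hHB (abs_nonneg lam))
    nlinarith [mul_nonneg hlamCHP hA]
  have hcoercive' : A + B ≤ 1 / (1 - θ) * (A + B - lam * H) := by
    rw [one_div_mul_eq_div, le_div_iff₀ (sub_pos.2 hθ)]
    linarith
  have hI_le_AB : I ≤ 1 / e₁ * (A + B) := by
    rw [one_div_mul_eq_div, le_div_iff₀ he₁]
    linarith
  have hAB_le_I : A + B ≤ (κ + e₂) * I := by linarith
  have hAB_le_B : A + B ≤ (κ / e₁ + 1) * B :=
    calc A + B ≤ κ * (B / e₁) + B := by gcongr; exact hAI.trans (by gcongr)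
      _ = (κ / e₁ + 1) * B := by ring
  have hN₁ : 0 ≤ A + B - lam * H := by nlinarith [mul_nonneg (sub_pos.2 hθ).le (add_nonneg hA hB)]
  exact ⟨⟨widen hcoercive' hN₁ (by linarith), widen hbounded (by linarith) (by linarith)⟩,
    ⟨widen hAB_le_I hI (by linarith), widen hI_le_AB (by linarith) (by linarith)⟩,
    ⟨widen hAB_le_B hB (by linarith), widen (c := 1) (by linarith) (by linarith) (by linarith)⟩⟩

theorem statement4_general (a b d : ℝ → ℝ) (K₁ : ℝ) (lam CHP : ℝ)
    (ha_cont : ContinuousOn a (Icc 0 1))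
    (ha_pos : ∀ x ∈ Ioc (0:ℝ) 1, 0 < a x)
    (hd_pos : ∀ x ∈ Ioc (0:ℝ) 1, 0 < d x)
    (hba : IntegrableOn (fun x => b x / a x) (Ioo 0 1))
    (hK₁ : K₁ ∈ Ioo (0:ℝ) 2)
    (hmona : ∃ δ > 0, MonotoneOn (fun x : ℝ => x ^ K₁ / a x) (Ioo (0:ℝ) δ))
    (η σ : ℝ → ℝ)
    (hη : ∀ x, η x = Real.exp (∫ s in (1/2:ℝ)..x, b s / a s))
    (hσ : ∀ x, σ x = a x / η x)
    (hCHP : 0 < CHP)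
    -- `C_HP` is a Hardy–Poincaré constant:
    (hHardy : ∀ u u' : ℝ → ℝ,
      (∀ x ∈ Ioo (0:ℝ) 1, HasDerivAt u (u' x) x) →
      ContinuousOn u (Icc 0 1) → u 0 = 0 → u 1 = 0 →
      IntegrableOn (fun x => u x ^ 2 / σ x) (Ioo 0 1) →
      IntegrableOn (fun x => η x * u' x ^ 2) (Ioo 0 1) →
      ∫ x in (0:ℝ)..1, u x ^ 2 / (σ x * d x) ≤
        CHP * ∫ x in (0:ℝ)..1, η x * u' x ^ 2)
    (hlam : lam < 1 / CHP) :
    ∃ C > 0, ∀ u u' : ℝ → ℝ,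
      (∀ x ∈ Ioo (0:ℝ) 1, HasDerivAt u (u' x) x) →
      ContinuousOn u (Icc 0 1) → u 0 = 0 → u 1 = 0 →
      IntegrableOn (fun x => u x ^ 2 / σ x) (Ioo 0 1) →
      IntegrableOn (fun x => u' x ^ 2) (Ioo 0 1) →
      (((∫ x in (0:ℝ)..1, u x ^ 2 / σ x) + ∫ x in (0:ℝ)..1, η x * u' x ^ 2) ≤
          C * (((∫ x in (0:ℝ)..1, u x ^ 2 / σ x) +
            ∫ x in (0:ℝ)..1, η x * u' x ^ 2) -
            lam * ∫ x in (0:ℝ)..1, u x ^ 2 / (σ x * d x)) ∧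
        (((∫ x in (0:ℝ)..1, u x ^ 2 / σ x) + ∫ x in (0:ℝ)..1, η x * u' x ^ 2) -
            lam * ∫ x in (0:ℝ)..1, u x ^ 2 / (σ x * d x)) ≤
          C * ((∫ x in (0:ℝ)..1, u x ^ 2 / σ x) +
            ∫ x in (0:ℝ)..1, η x * u' x ^ 2)) ∧
      (((∫ x in (0:ℝ)..1, u x ^ 2 / σ x) + ∫ x in (0:ℝ)..1, η x * u' x ^ 2) ≤
          C * ∫ x in (0:ℝ)..1, u' x ^ 2 ∧
        (∫ x in (0:ℝ)..1, u' x ^ 2) ≤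
          C * ((∫ x in (0:ℝ)..1, u x ^ 2 / σ x) +
            ∫ x in (0:ℝ)..1, η x * u' x ^ 2)) ∧
      (((∫ x in (0:ℝ)..1, u x ^ 2 / σ x) + ∫ x in (0:ℝ)..1, η x * u' x ^ 2) ≤
          C * ∫ x in (0:ℝ)..1, η x * u' x ^ 2 ∧
        (∫ x in (0:ℝ)..1, η x * u' x ^ 2) ≤
          C * ((∫ x in (0:ℝ)..1, u x ^ 2 / σ x) +
            ∫ x in (0:ℝ)..1, η x * u' x ^ 2)) := by
  obtain ⟨e, he, hη_bdd, hη_meas⟩ :=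
    exists_mem_Icc_inv_and_aestronglyMeasurable_of_eq_exp hba hη
  obtain ⟨δ, hδ, hmono⟩ := hmona
  obtain ⟨c, hc, ha_lb⟩ := exists_mul_rpow_le_of_monotoneOn hK₁.1.le hδ ha_cont ha_pos hmono
  have hσ_lb : ∀ x ∈ Ioo (0:ℝ) 1, c / e * x ^ K₁ ≤ σ x := fun x hx => by
    rw [hσ, div_mul_eq_mul_div]
    exact div_le_div₀ (ha_pos x ⟨hx.1, hx.2.le⟩).le (ha_lb x ⟨hx.1, hx.2.le⟩)
      ((inv_pos.2 he).trans_le (hη_bdd x hx).1) (hη_bdd x hx).2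
  have hσ_pos : ∀ x ∈ Ioo (0:ℝ) 1, 0 < σ x := fun x hx =>
    (mul_pos (div_pos hc he) (Real.rpow_pos_of_pos hx.1 _)).trans_le (hσ_lb x hx)
  have hJ : 0 ≤ ∫ x in Ioo (0:ℝ) 1, x ^ (1 - K₁) :=
    setIntegral_nonneg measurableSet_Ioo fun x hx => Real.rpow_nonneg hx.1.le _
  obtain ⟨C, hC, hbounds⟩ := exists_const_le_mul_of_bounds (div_nonneg hJ (div_pos hc he).le)
    (inv_pos.2 he) he.le hCHP hlam
  refine ⟨C, hC, fun u u' hu hu_cont hu0 hu1 huσ hu' => ?_⟩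
  have hηu' : IntegrableOn (fun x => η x * u' x ^ 2) (Ioo 0 1) :=
    integrableOn_mul_of_mem_Icc measurableSet_Ioo (inv_pos.2 he).le hη_meas hη_bdd hu'
  have hHardy_u := hHardy u u' hu hu_cont hu0 hu1 huσ hηu'
  have hηu'_bdd :=
    setIntegral_mul_mem_Icc measurableSet_Ioo hu' hηu' hη_bdd fun x _ => sq_nonneg (u' x)
  simp only [intervalIntegral.integral_of_le zero_le_one, integral_Ioc_eq_integral_Ioo]
    at hHardy_u ⊢
  exact hbounds _ _ _ _
    (setIntegral_nonneg measurableSet_Ioo fun x hx => div_nonneg (sq_nonneg _) (hσ_pos x hx).le)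
    (setIntegral_nonneg measurableSet_Ioo fun x hx => div_nonneg (sq_nonneg _)
      (mul_pos (hσ_pos x hx) (hd_pos x ⟨hx.1, hx.2.le⟩)).le)
    (setIntegral_nonneg measurableSet_Ioo fun x _ => sq_nonneg _)
    (setIntegral_sq_div_le_of_mul_rpow_le (div_pos hc he) hK₁.2 hσ_lb
      (fun x hx => sq_le_mul_setIntegral_sq_deriv hu hu_cont hu0 hu' hx) huσ)
    hηu'_bdd.1 hηu'_bdd.2 hHardy_u

/-- equivalence of the four norms
`‖u‖²_{1,1/σ} = ∫ u²/σ + ∫ η (u')²`,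
`‖u‖₁² = ∫ u²/σ + ∫ η (u')² − λ ∫ u²/(σ d)`,
`‖u‖²_{1,∘} = ∫ (u')²` and `‖u‖²_{1,•} = ∫ η (u')²`
on `H¹_{1/σ}(0,1) = L²_{1/σ}(0,1) ∩ H¹₀(0,1)`, for `λ < 1/C_HP`. -/
theorem statement4 (a b d : ℝ → ℝ) (K₁ K₂ : ℝ) (lam CHP : ℝ)
    (ha_cont : ContinuousOn a (Icc 0 1)) (hb_cont : ContinuousOn b (Icc 0 1))
    (hd_cont : ContinuousOn d (Icc 0 1))
    (ha0 : a 0 = 0) (hd0 : d 0 = 0)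
    (ha_pos : ∀ x ∈ Ioc (0:ℝ) 1, 0 < a x)
    (hd_pos : ∀ x ∈ Ioc (0:ℝ) 1, 0 < d x)
    (hba : IntegrableOn (fun x => b x / a x) (Ioo 0 1))
    (hK₁ : K₁ ∈ Ioo (0:ℝ) 2) (hK₂ : K₂ ∈ Ioo (0:ℝ) 2) (hsum : K₁ + K₂ ≤ 2)
    (hmona : ∃ δ > 0, MonotoneOn (fun x : ℝ => x ^ K₁ / a x) (Ioo (0:ℝ) δ))
    (hmond : ∃ δ > 0, MonotoneOn (fun x : ℝ => x ^ K₂ / d x) (Ioo (0:ℝ) δ))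
    (η σ : ℝ → ℝ)
    (hη : ∀ x, η x = Real.exp (∫ s in (1/2:ℝ)..x, b s / a s))
    (hσ : ∀ x, σ x = a x / η x)
    (hCHP : 0 < CHP)
    -- `C_HP` is a Hardy–Poincaré constant:
    (hHardy : ∀ u u' : ℝ → ℝ,
      (∀ x ∈ Ioo (0:ℝ) 1, HasDerivAt u (u' x) x) →
      ContinuousOn u (Icc 0 1) → u 0 = 0 → u 1 = 0 →
      IntegrableOn (fun x => u x ^ 2 / σ x) (Ioo 0 1) →
      IntegrableOn (fun x => η x * u' x ^ 2) (Ioo 0 1) →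
      ∫ x in (0:ℝ)..1, u x ^ 2 / (σ x * d x) ≤
        CHP * ∫ x in (0:ℝ)..1, η x * u' x ^ 2)
    (hlam : lam < 1 / CHP) :
    ∃ C > 0, ∀ u u' : ℝ → ℝ,
      (∀ x ∈ Ioo (0:ℝ) 1, HasDerivAt u (u' x) x) →
      ContinuousOn u (Icc 0 1) → u 0 = 0 → u 1 = 0 →
      IntegrableOn (fun x => u x ^ 2 / σ x) (Ioo 0 1) →
      IntegrableOn (fun x => u' x ^ 2) (Ioo 0 1) →
      (((∫ x in (0:ℝ)..1, u x ^ 2 / σ x) + ∫ x in (0:ℝ)..1, η x * u' x ^ 2) ≤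
          C * (((∫ x in (0:ℝ)..1, u x ^ 2 / σ x) +
            ∫ x in (0:ℝ)..1, η x * u' x ^ 2) -
            lam * ∫ x in (0:ℝ)..1, u x ^ 2 / (σ x * d x)) ∧
        (((∫ x in (0:ℝ)..1, u x ^ 2 / σ x) + ∫ x in (0:ℝ)..1, η x * u' x ^ 2) -
            lam * ∫ x in (0:ℝ)..1, u x ^ 2 / (σ x * d x)) ≤
          C * ((∫ x in (0:ℝ)..1, u x ^ 2 / σ x) +
            ∫ x in (0:ℝ)..1, η x * u' x ^ 2)) ∧
      (((∫ x in (0:ℝ)..1, u x ^ 2 / σ x) + ∫ x in (0:ℝ)..1, η x * u' x ^ 2) ≤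
          C * ∫ x in (0:ℝ)..1, u' x ^ 2 ∧
        (∫ x in (0:ℝ)..1, u' x ^ 2) ≤
          C * ((∫ x in (0:ℝ)..1, u x ^ 2 / σ x) +
            ∫ x in (0:ℝ)..1, η x * u' x ^ 2)) ∧
      (((∫ x in (0:ℝ)..1, u x ^ 2 / σ x) + ∫ x in (0:ℝ)..1, η x * u' x ^ 2) ≤
          C * ∫ x in (0:ℝ)..1, η x * u' x ^ 2 ∧
        (∫ x in (0:ℝ)..1, η x * u' x ^ 2) ≤
          C * ((∫ x in (0:ℝ)..1, u x ^ 2 / σ x) +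
            ∫ x in (0:ℝ)..1, η x * u' x ^ 2)) :=
  statement4_general a b d K₁ lam CHP ha_cont ha_pos hd_pos hba hK₁ hmona η σ hη hσ hCHP hHardy hlam
end

section
/- If u ∈ H¹(0,1) with u(0)=0, and a : [0,1] → ℝ is continuous with a(0)=0, a>0 on (0,1], and x ↦ x^{K₁}/a(x) is nondecreasing near 0 for some K₁ ∈ (0,2), then lim_{x→0⁺} x u(x)²/a(x) = 0. -/
/-!
By the fundamental theorem of calculus and Cauchy–Schwarz, `u x ^ 2 ≤ x * ∫₀¹ u' ^ 2`, so
`x * u x ^ 2 / a x` is at most a constant times `x ^ 2 / a x = (x ^ K₁ / a x) * x ^ (2 - K₁)`.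
Monotonicity bounds the first factor near `0`, and the second tends to `0` because `K₁ < 2`.
-/

open Set MeasureTheory Filter Topology

theorem sq_integral_abs_le_measureReal_mul_integral_sq {α : Type*} [MeasurableSpace α]
    {μ : Measure α} [IsFiniteMeasure μ] {g : α → ℝ} (hg : MemLp g 2 μ) :
    (∫ x, |g x| ∂μ) ^ 2 ≤ μ.real univ * ∫ x, g x ^ 2 ∂μ := by
  have holder := integral_mul_le_Lp_mul_Lq_of_nonneg Real.HolderConjugate.two_two
    (f := fun x => |g x|) (g := fun _ => (1 : ℝ)) (ae_of_all _ fun _ => abs_nonneg _)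
    (ae_of_all _ fun _ => zero_le_one) (by rw [ENNReal.ofReal_ofNat]; exact hg.abs) (memLp_const 1)
  simp only [mul_one, one_pow, Real.rpow_two, sq_abs, integral_const, smul_eq_mul,
    ← Real.sqrt_eq_rpow] at holder
  calc (∫ x, |g x| ∂μ) ^ 2
      ≤ (√(∫ x, g x ^ 2 ∂μ) * √(μ.real univ)) ^ 2 :=
        pow_le_pow_left₀ (integral_nonneg fun _ => abs_nonneg _) holder 2
    _ = μ.real univ * ∫ x, g x ^ 2 ∂μ := by
        rw [mul_pow, Real.sq_sqrt (integral_nonneg fun _ => sq_nonneg _),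
          Real.sq_sqrt measureReal_nonneg, mul_comm]

theorem aestronglyMeasurable_of_hasDerivAt {f f' : ℝ → ℝ} {s : Set ℝ} (hs : MeasurableSet s)
    (hderiv : ∀ x ∈ s, HasDerivAt f (f' x) x) : AEStronglyMeasurable f' (volume.restrict s) :=
  (measurable_deriv f).aestronglyMeasurable.congr <| by
    filter_upwards [ae_restrict_mem hs] with x hx using (hderiv x hx).deriv

theorem sq_sub_le_mul_integral_sq {f f' : ℝ → ℝ} {a b : ℝ} (hab : a ≤ b)
    (hf : ContinuousOn f (Icc a b)) (hderiv : ∀ x ∈ Ioo a b, HasDerivAt f (f' x) x)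
    (hf' : IntegrableOn (fun x => f' x ^ 2) (Ioo a b)) :
    (f b - f a) ^ 2 ≤ (b - a) * ∫ x in Ioo a b, f' x ^ 2 := by
  have hL2 : MemLp f' 2 (volume.restrict (Ioo a b)) :=
    (memLp_two_iff_integrable_sq (aestronglyMeasurable_of_hasDerivAt measurableSet_Ioo hderiv)).2
      hf'
  have hint : IntervalIntegrable f' volume a b := by
    rw [intervalIntegrable_iff_integrableOn_Ioo_of_le hab]
    exact hL2.integrable one_le_two
  have ftc : f b - f a = ∫ x in Ioo a b, f' x := by
    rw [← intervalIntegral.integral_eq_sub_of_hasDerivAt_of_le hab hf hderiv hint,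
      intervalIntegral.integral_of_le hab, integral_Ioc_eq_integral_Ioo]
  calc (f b - f a) ^ 2 = |∫ x in Ioo a b, f' x| ^ 2 := by rw [ftc, sq_abs]
    _ ≤ (∫ x in Ioo a b, |f' x|) ^ 2 :=
        pow_le_pow_left₀ (abs_nonneg _) abs_integral_le_integral_abs 2
    _ ≤ (b - a) * ∫ x in Ioo a b, f' x ^ 2 := by
        simpa [Real.volume_real_Ioo_of_le hab] using
          sq_integral_abs_le_measureReal_mul_integral_sq hL2

theorem tendsto_sq_div_nhdsGT_zero_of_monotoneOn {a : ℝ → ℝ} {K δ : ℝ} (hK : K < 2)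
    (hδ : 0 < δ) (ha : ∀ x ∈ Ioo 0 δ, 0 ≤ a x)
    (hmono : MonotoneOn (fun x => x ^ K / a x) (Ioo 0 δ)) :
    Tendsto (fun x => x ^ 2 / a x) (𝓝[>] 0) (𝓝 0) := by
  have hy : δ / 2 ∈ Ioo 0 δ := ⟨by positivity, by linarith⟩
  have hpow : Tendsto (fun x : ℝ => x ^ (2 - K)) (𝓝[>] 0) (𝓝 0) :=
    (tendsto_nhdsWithin_of_tendsto_nhds tendsto_id).rpow_const_nhds_zero (by linarith)
  refine squeeze_zero' ?_ ?_ (by simpa using hpow.const_mul ((δ / 2) ^ K / a (δ / 2)))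
  · filter_upwards [Ioo_mem_nhdsGT hδ] with x hx
    exact div_nonneg (sq_nonneg x) (ha x hx)
  · filter_upwards [Ioo_mem_nhdsGT hy.1] with x hx
    have hxδ : x ∈ Ioo 0 δ := ⟨hx.1, hx.2.trans hy.2⟩
    have split : x ^ 2 = x ^ K * x ^ (2 - K) := by
      rw [← Real.rpow_add hx.1, add_sub_cancel, Real.rpow_two]
    calc x ^ 2 / a x = x ^ K / a x * x ^ (2 - K) := by rw [split]; ring
      _ ≤ (δ / 2) ^ K / a (δ / 2) * x ^ (2 - K) :=
          mul_le_mul_of_nonneg_right (hmono hxδ hy hx.2.le) (Real.rpow_nonneg hx.1.le _)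

theorem statement5_general (a u u' : ℝ → ℝ) (K₁ : ℝ)
    (ha_pos : ∀ x ∈ Ioc (0:ℝ) 1, 0 < a x)
    (hK₁ : K₁ ∈ Ioo (0:ℝ) 2)
    (hmona : ∃ δ > 0, MonotoneOn (fun x : ℝ => x ^ K₁ / a x) (Ioo (0:ℝ) δ))
    (hu : ∀ x ∈ Ioo (0:ℝ) 1, HasDerivAt u (u' x) x)
    (hu_cont : ContinuousOn u (Icc 0 1))
    (hu0 : u 0 = 0)
    (hu' : IntegrableOn (fun x => u' x ^ 2) (Ioo 0 1)) :
    Tendsto (fun x : ℝ => x * u x ^ 2 / a x) (nhdsWithin 0 (Ioi 0)) (nhds 0) := by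
  obtain ⟨δ, hδ, hmono⟩ := hmona
  set M := ∫ t in Ioo (0:ℝ) 1, u' t ^ 2
  have hu_sq : ∀ x ∈ Ioo (0:ℝ) 1, u x ^ 2 ≤ x * M := fun x hx => by
    have hsub : Ioo 0 x ⊆ Ioo (0:ℝ) 1 := Ioo_subset_Ioo_right hx.2.le
    have h := sq_sub_le_mul_integral_sq hx.1.le (hu_cont.mono (Icc_subset_Icc_right hx.2.le))
      (fun t ht => hu t (hsub ht)) (hu'.mono_set hsub)
    rw [hu0, sub_zero, sub_zero] at h
    exact h.trans <| mul_le_mul_of_nonneg_left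
      (setIntegral_mono_set hu' (ae_of_all _ fun _ => sq_nonneg _) hsub.eventuallyLE) hx.1.le
  have hsq_div : Tendsto (fun x => x ^ 2 / a x) (𝓝[>] 0) (𝓝 0) :=
    tendsto_sq_div_nhdsGT_zero_of_monotoneOn hK₁.2 (lt_min hδ one_pos)
      (fun x hx => (ha_pos x ⟨hx.1, hx.2.le.trans (min_le_right _ _)⟩).le)
      (hmono.mono (Ioo_subset_Ioo_right (min_le_left _ _)))
  refine squeeze_zero' ?_ ?_ (by simpa using hsq_div.const_mul M)
  all_goals
    filter_upwards [Ioo_mem_nhdsGT one_pos] with x hx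
    have hx0 := hx.1
    have hax := ha_pos x ⟨hx.1, hx.2.le⟩
  · positivity
  · calc x * u x ^ 2 / a x ≤ x * (x * M) / a x := by gcongr; exact hu_sq x hx
      _ = M * (x ^ 2 / a x) := by ring

/-- if `u ∈ H¹(0,1)` with `u 0 = 0`, and `a` is continuous with
`a 0 = 0`, `a > 0` on `(0,1]`, and `x ↦ x^K₁ / a x` nondecreasing near `0`
for some `K₁ ∈ (0,2)`, then `lim_{x→0⁺} x * u(x)² / a(x) = 0`. -/
theorem statement5 (a u u' : ℝ → ℝ) (K₁ : ℝ)
    (ha_cont : ContinuousOn a (Icc 0 1))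
    (ha0 : a 0 = 0)
    (ha_pos : ∀ x ∈ Ioc (0:ℝ) 1, 0 < a x)
    (hK₁ : K₁ ∈ Ioo (0:ℝ) 2)
    (hmona : ∃ δ > 0, MonotoneOn (fun x : ℝ => x ^ K₁ / a x) (Ioo (0:ℝ) δ))
    (hu : ∀ x ∈ Ioo (0:ℝ) 1, HasDerivAt u (u' x) x)
    (hu_cont : ContinuousOn u (Icc 0 1))
    (hu0 : u 0 = 0)
    (hu' : IntegrableOn (fun x => u' x ^ 2) (Ioo 0 1)) :
    Tendsto (fun x : ℝ => x * u x ^ 2 / a x) (nhdsWithin 0 (Ioi 0)) (nhds 0) :=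
  statement5_general a u u' K₁ ha_pos hK₁ hmona hu hu_cont hu0 hu'
end

section
/- If u ∈ H¹(0,1) with u(0)=0, and a,d : [0,1] → ℝ are continuous, vanish at 0, are positive on (0,1], and x ↦ x^{K₁}/a(x), x ↦ x^{K₂}/d(x) are nondecreasing near 0 with K₁+K₂ < 2, then lim_{x→0⁺} x u(x)²/(a(x)d(x)) = 0. -/
/-!
By the fundamental theorem of calculus and Cauchy–Schwarz, `u x ^ 2 ≤ x * ∫₀¹ u' ^ 2`, so
`u x ^ 2 / x` stays bounded near `0`. The monotone positive functions `x ^ K₁ / a x` and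
`x ^ K₂ / d x` are bounded near `0` by their values at a fixed small point. Hence
`x * u x ^ 2 / (a x * d x) = x ^ (2 - (K₁ + K₂)) * (u x ^ 2 / x) * (x ^ K₁ / a x) * (x ^ K₂ / d x)`
is a vanishing power times three bounded factors.
-/

open Set MeasureTheory Filter Topology

theorem sq_integral_le_measureReal_mul_integral_sq {α : Type*} [MeasurableSpace α]
    {μ : Measure α} [IsFiniteMeasure μ] {f : α → ℝ} (hf : MemLp f 2 μ) :
    (∫ x, f x ∂μ) ^ 2 ≤ μ.real univ * ∫ x, f x ^ 2 ∂μ := by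
  have holder := integral_mul_norm_le_Lp_mul_Lq Real.HolderConjugate.two_two
    (by simpa using hf) (memLp_const (1 : ℝ) : MemLp (fun _ => (1 : ℝ)) (ENNReal.ofReal 2) μ)
  simp only [norm_one, mul_one, one_pow, integral_const, smul_eq_mul, Real.norm_eq_abs,
    Real.rpow_two, sq_abs, ← Real.sqrt_eq_rpow] at holder
  rw [← Real.sqrt_mul (integral_nonneg fun x => sq_nonneg (f x)), mul_comm] at holder
  have := (abs_integral_le_integral_abs (f := f) (μ := μ)).trans holder
  rwa [← sq_abs, ← Real.le_sqrt (abs_nonneg _) (by positivity)]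

theorem sq_sub_le_mul_integral_sq_deriv {u u' : ℝ → ℝ} {a b : ℝ} (hab : a ≤ b)
    (hcont : ContinuousOn u (Icc a b)) (hderiv : ∀ x ∈ Ioo a b, HasDerivAt u (u' x) x)
    (hint : IntegrableOn (fun x => u' x ^ 2) (Ioc a b)) :
    (u b - u a) ^ 2 ≤ (b - a) * ∫ x in a..b, u' x ^ 2 := by
  have hmeas : AEStronglyMeasurable u' (volume.restrict (Ioc a b)) := by
    refine (measurable_deriv u).aestronglyMeasurable.congr ?_
    rw [← Measure.restrict_congr_set Ioo_ae_eq_Ioc]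
    exact (ae_restrict_iff' measurableSet_Ioo).2 (ae_of_all _ fun x hx => (hderiv x hx).deriv)
  have hL2 : MemLp u' 2 (volume.restrict (Ioc a b)) := (memLp_two_iff_integrable_sq hmeas).2 hint
  have hFTC : ∫ x in a..b, u' x = u b - u a :=
    intervalIntegral.integral_eq_sub_of_hasDeriv_right_of_le hab hcont
      (fun x hx => (hderiv x hx).hasDerivWithinAt)
      ((intervalIntegrable_iff_integrableOn_Ioc_of_le hab).2 (hL2.integrable one_le_two))
  rw [← hFTC, intervalIntegral.integral_of_le hab, intervalIntegral.integral_of_le hab]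
  simpa [Real.volume_Ioc, hab] using sq_integral_le_measureReal_mul_integral_sq hL2

theorem sq_sub_le_mul_setIntegral_sq_deriv {u u' : ℝ → ℝ} {a b x : ℝ} (hx : x ∈ Ioo a b)
    (hcont : ContinuousOn u (Icc a b)) (hderiv : ∀ x ∈ Ioo a b, HasDerivAt u (u' x) x)
    (hint : IntegrableOn (fun x => u' x ^ 2) (Ioo a b)) :
    (u x - u a) ^ 2 ≤ (x - a) * ∫ t in Ioo a b, u' t ^ 2 := by
  have hsub : Ioc a x ⊆ Ioo a b := Ioc_subset_Ioo_right hx.2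
  have h := sq_sub_le_mul_integral_sq_deriv hx.1.le (hcont.mono (Icc_subset_Icc_right hx.2.le))
    (fun t ht => hderiv t ⟨ht.1, ht.2.trans hx.2⟩) (hint.mono_set hsub)
  rw [intervalIntegral.integral_of_le hx.1.le] at h
  exact h.trans (mul_le_mul_of_nonneg_left (setIntegral_mono_set hint
    (ae_of_all _ fun t => sq_nonneg _) hsub.eventuallyLE) (sub_nonneg.2 hx.1.le))

theorem MonotoneOn.isBoundedUnder_norm_nhdsGT {f : ℝ → ℝ} {a b : ℝ} (hab : a < b)
    (hf : MonotoneOn f (Ioo a b)) (hf_nonneg : ∀ᶠ x in 𝓝[>] a, 0 ≤ f x) :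
    IsBoundedUnder (· ≤ ·) (𝓝[>] a) (norm ∘ f) := by
  obtain ⟨c, hac, hcb⟩ := exists_between hab
  refine isBoundedUnder_of_eventually_le (a := f c) ?_
  filter_upwards [hf_nonneg, Ioo_mem_nhdsGT hac] with x hx_nonneg hx
  rw [Function.comp_apply, Real.norm_of_nonneg hx_nonneg]
  exact hf ⟨hx.1, hx.2.trans hcb⟩ ⟨hac, hcb⟩ hx.2.le

theorem tendsto_rpow_nhdsGT_zero {p : ℝ} (hp : 0 < p) :
    Tendsto (fun x : ℝ => x ^ p) (𝓝[>] 0) (𝓝 0) := by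
  simpa [Real.zero_rpow hp.ne'] using
    (Real.continuousAt_rpow_const 0 p (Or.inr hp.le)).tendsto.mono_left nhdsWithin_le_nhds

theorem statement6_general (a d u u' : ℝ → ℝ) (K₁ K₂ : ℝ)
    (ha_pos : ∀ x ∈ Ioc (0:ℝ) 1, 0 < a x)
    (hd_pos : ∀ x ∈ Ioc (0:ℝ) 1, 0 < d x)
    (hsum : K₁ + K₂ < 2)
    (hmona : ∃ δ > 0, MonotoneOn (fun x : ℝ => x ^ K₁ / a x) (Ioo (0:ℝ) δ))
    (hmond : ∃ δ > 0, MonotoneOn (fun x : ℝ => x ^ K₂ / d x) (Ioo (0:ℝ) δ))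
    (hu : ∀ x ∈ Ioo (0:ℝ) 1, HasDerivAt u (u' x) x)
    (hu_cont : ContinuousOn u (Icc 0 1))
    (hu0 : u 0 = 0)
    (hu' : IntegrableOn (fun x => u' x ^ 2) (Ioo 0 1)) :
    Tendsto (fun x : ℝ => x * u x ^ 2 / (a x * d x))
      (nhdsWithin 0 (Ioi 0)) (nhds 0) := by
  obtain ⟨δa, hδa, hma⟩ := hmona
  obtain ⟨δd, hδd, hmd⟩ := hmond
  have near_zero : ∀ᶠ x in 𝓝[>] (0:ℝ), x ∈ Ioo 0 1 := Ioo_mem_nhdsGT one_pos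
  have ha_near : ∀ᶠ x in 𝓝[>] (0:ℝ), x ∈ Ioo 0 1 ∧ 0 < a x :=
    near_zero.mono fun x hx => ⟨hx, ha_pos x (Ioo_subset_Ioc_self hx)⟩
  have hd_near : ∀ᶠ x in 𝓝[>] (0:ℝ), x ∈ Ioo 0 1 ∧ 0 < d x :=
    near_zero.mono fun x hx => ⟨hx, hd_pos x (Ioo_subset_Ioc_self hx)⟩
  have hu_bdd : IsBoundedUnder (· ≤ ·) (𝓝[>] 0) (norm ∘ fun x => u x ^ 2 / x) := by
    refine isBoundedUnder_of_eventually_le (a := ∫ t in Ioo (0:ℝ) 1, u' t ^ 2) ?_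
    filter_upwards [near_zero] with x hx
    have hx0 := hx.1
    rw [Function.comp_apply, Real.norm_of_nonneg (by positivity), div_le_iff₀ hx0, mul_comm]
    simpa [hu0] using sq_sub_le_mul_setIntegral_sq_deriv hx hu_cont hu hu'
  have hsplit : (fun x => x ^ (2 - (K₁ + K₂)) * (u x ^ 2 / x) * (x ^ K₁ / a x) * (x ^ K₂ / d x))
      =ᶠ[𝓝[>] 0] fun x => x * u x ^ 2 / (a x * d x) := by
    filter_upwards [ha_near, hd_near] with x ⟨hx, hax⟩ ⟨_, hdx⟩
    have := (Real.rpow_pos_of_pos hx.1 K₁).ne'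
    have := (Real.rpow_pos_of_pos hx.1 K₂).ne'
    rw [Real.rpow_sub hx.1, Real.rpow_add hx.1, Real.rpow_two]
    field_simp [hx.1.ne', hax.ne', hdx.ne']
  refine Tendsto.congr' hsplit ?_
  refine (((tendsto_rpow_nhdsGT_zero (by linarith)).zero_mul_isBoundedUnder_le hu_bdd)
    |>.zero_mul_isBoundedUnder_le ?_) |>.zero_mul_isBoundedUnder_le ?_
  · exact hma.isBoundedUnder_norm_nhdsGT hδa <|
      ha_near.mono fun x h => div_nonneg (Real.rpow_nonneg h.1.1.le _) h.2.le
  · exact hmd.isBoundedUnder_norm_nhdsGT hδd <|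
      hd_near.mono fun x h => div_nonneg (Real.rpow_nonneg h.1.1.le _) h.2.le

/-- if `u ∈ H¹(0,1)` with `u 0 = 0`, and `a, d` are continuous,
vanish at `0`, positive on `(0,1]`, with `x ↦ x^K₁/a x` and `x ↦ x^K₂/d x`
nondecreasing near `0` and `K₁ + K₂ < 2`, then
`lim_{x→0⁺} x * u(x)² / (a(x) d(x)) = 0`. -/
theorem statement6 (a d u u' : ℝ → ℝ) (K₁ K₂ : ℝ)
    (ha_cont : ContinuousOn a (Icc 0 1)) (hd_cont : ContinuousOn d (Icc 0 1))
    (ha0 : a 0 = 0) (hd0 : d 0 = 0)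
    (ha_pos : ∀ x ∈ Ioc (0:ℝ) 1, 0 < a x)
    (hd_pos : ∀ x ∈ Ioc (0:ℝ) 1, 0 < d x)
    (hK₁ : K₁ ∈ Ioo (0:ℝ) 2) (hK₂ : K₂ ∈ Ioo (0:ℝ) 2)
    (hsum : K₁ + K₂ < 2)
    (hmona : ∃ δ > 0, MonotoneOn (fun x : ℝ => x ^ K₁ / a x) (Ioo (0:ℝ) δ))
    (hmond : ∃ δ > 0, MonotoneOn (fun x : ℝ => x ^ K₂ / d x) (Ioo (0:ℝ) δ))
    (hu : ∀ x ∈ Ioo (0:ℝ) 1, HasDerivAt u (u' x) x)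
    (hu_cont : ContinuousOn u (Icc 0 1))
    (hu0 : u 0 = 0)
    (hu' : IntegrableOn (fun x => u' x ^ 2) (Ioo 0 1)) :
    Tendsto (fun x : ℝ => x * u x ^ 2 / (a x * d x))
      (nhdsWithin 0 (Ioi 0)) (nhds 0) :=
  statement6_general a d u u' K₁ K₂ ha_pos hd_pos hsum hmona hmond hu hu_cont hu0 hu'
end

section
/- If u ∈ H¹(0,1) with u(0)=0, and a,d as above with K₁+K₂ ≤ 2 (equality allowed), then lim_{x→0⁺} x² u(x)²/(a(x)d(x)) = 0. -/
/-!
Near `0⁺` write `x² / (a d) = x^(2 - K₁ - K₂) · (x^K₁ / a) · (x^K₂ / d)`: the first factor is at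
most `1` because `K₁ + K₂ ≤ 2`, and the other two are bounded by monotonicity. So `x² / (a d)` stays
bounded while `u(x)² → u(0)² = 0` by continuity.
-/

open Set MeasureTheory Filter Topology

theorem MonotoneOn.exists_eventually_le_nhdsGT {α β : Type*} [LinearOrder α] [TopologicalSpace α]
    [OrderTopology α] [DenselyOrdered α] [Preorder β] {f : α → β} {a b : α} (hab : a < b)
    (hf : MonotoneOn f (Ioo a b)) : ∃ C, ∀ᶠ x in 𝓝[>] a, f x ≤ C := by
  obtain ⟨c, hac, hcb⟩ := exists_between hab
  refine ⟨f c, ?_⟩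
  filter_upwards [Ioc_mem_nhdsGT hac] with x hx
  exact hf ⟨hx.1, hx.2.trans_lt hcb⟩ ⟨hac, hcb⟩ hx.2

theorem sq_div_mul_eq_rpow_mul {x : ℝ} (hx : 0 < x) (a d K₁ K₂ : ℝ) :
    x ^ 2 / (a * d) = x ^ (2 - (K₁ + K₂)) * (x ^ K₁ / a * (x ^ K₂ / d)) := by
  have hsplit : x ^ (2 - (K₁ + K₂)) * (x ^ K₁ * x ^ K₂) = x ^ 2 := by
    rw [← Real.rpow_add hx, ← Real.rpow_add hx, sub_add_cancel, Real.rpow_two]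
  rw [← hsplit]
  ring

theorem sq_div_mul_le_mul {x a d K₁ K₂ C₁ C₂ : ℝ} (hx₀ : 0 < x) (hx₁ : x ≤ 1)
    (hK : K₁ + K₂ ≤ 2) (ha : 0 < a) (hd : 0 < d) (h₁ : x ^ K₁ / a ≤ C₁)
    (h₂ : x ^ K₂ / d ≤ C₂) : x ^ 2 / (a * d) ≤ C₁ * C₂ := by
  have hpow : x ^ (2 - (K₁ + K₂)) ≤ 1 := Real.rpow_le_one hx₀.le hx₁ (by linarith)
  have hC₁ : 0 ≤ C₁ := (by positivity : 0 ≤ x ^ K₁ / a).trans h₁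
  rw [sq_div_mul_eq_rpow_mul hx₀, ← one_mul (C₁ * C₂)]
  gcongr

theorem statement7_general (a d u : ℝ → ℝ) (K₁ K₂ : ℝ)
    (ha_pos : ∀ x ∈ Ioc (0:ℝ) 1, 0 < a x)
    (hd_pos : ∀ x ∈ Ioc (0:ℝ) 1, 0 < d x)
    (hsum : K₁ + K₂ ≤ 2)
    (hmona : ∃ δ > 0, MonotoneOn (fun x : ℝ => x ^ K₁ / a x) (Ioo (0:ℝ) δ))
    (hmond : ∃ δ > 0, MonotoneOn (fun x : ℝ => x ^ K₂ / d x) (Ioo (0:ℝ) δ))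
    (hu_cont : ContinuousOn u (Icc 0 1))
    (hu0 : u 0 = 0) :
    Tendsto (fun x : ℝ => x ^ 2 * u x ^ 2 / (a x * d x))
      (nhdsWithin 0 (Ioi 0)) (nhds 0) := by
  obtain ⟨δ₁, hδ₁, hma⟩ := hmona
  obtain ⟨δ₂, hδ₂, hmd⟩ := hmond
  obtain ⟨C₁, hC₁⟩ := hma.exists_eventually_le_nhdsGT hδ₁
  obtain ⟨C₂, hC₂⟩ := hmd.exists_eventually_le_nhdsGT hδ₂
  have hu_lim : Tendsto (fun x => u x ^ 2) (𝓝[>] 0) (𝓝 0) := by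
    have hu_at := (hu_cont 0 ⟨le_rfl, zero_le_one⟩).mono_of_mem_nhdsWithin
      (Icc_mem_nhdsGT (zero_lt_one' ℝ))
    simpa [hu0] using hu_at.tendsto.pow 2
  have hweight : IsBoundedUnder (· ≤ ·) (𝓝[>] 0) (fun x : ℝ => ‖x ^ 2 / (a x * d x)‖) := by
    refine isBoundedUnder_of_eventually_le (a := C₁ * C₂) ?_
    filter_upwards [Ioc_mem_nhdsGT (zero_lt_one' ℝ), hC₁, hC₂] with x hx h₁ h₂
    have ha := ha_pos x hx
    have hd := hd_pos x hx
    rw [Real.norm_of_nonneg (by positivity)]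
    exact sq_div_mul_le_mul hx.1 hx.2 hsum ha hd h₁ h₂
  refine (hu_lim.zero_mul_isBoundedUnder_le hweight).congr fun x => ?_
  ring

/-- if `u ∈ H¹(0,1)` with `u 0 = 0`, and `a, d` are continuous,
vanish at `0`, positive on `(0,1]`, with `x ↦ x^K₁/a x` and `x ↦ x^K₂/d x`
nondecreasing near `0` and `K₁ + K₂ ≤ 2` (equality allowed), then
`lim_{x→0⁺} x² * u(x)² / (a(x) d(x)) = 0`. -/
theorem statement7 (a d u u' : ℝ → ℝ) (K₁ K₂ : ℝ)
    (ha_cont : ContinuousOn a (Icc 0 1)) (hd_cont : ContinuousOn d (Icc 0 1))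
    (ha0 : a 0 = 0) (hd0 : d 0 = 0)
    (ha_pos : ∀ x ∈ Ioc (0:ℝ) 1, 0 < a x)
    (hd_pos : ∀ x ∈ Ioc (0:ℝ) 1, 0 < d x)
    (hK₁ : K₁ ∈ Ioo (0:ℝ) 2) (hK₂ : K₂ ∈ Ioo (0:ℝ) 2)
    (hsum : K₁ + K₂ ≤ 2)
    (hmona : ∃ δ > 0, MonotoneOn (fun x : ℝ => x ^ K₁ / a x) (Ioo (0:ℝ) δ))
    (hmond : ∃ δ > 0, MonotoneOn (fun x : ℝ => x ^ K₂ / d x) (Ioo (0:ℝ) δ))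
    (hu : ∀ x ∈ Ioo (0:ℝ) 1, HasDerivAt u (u' x) x)
    (hu_cont : ContinuousOn u (Icc 0 1))
    (hu0 : u 0 = 0)
    (hu' : IntegrableOn (fun x => u' x ^ 2) (Ioo 0 1)) :
    Tendsto (fun x : ℝ => x ^ 2 * u x ^ 2 / (a x * d x))
      (nhdsWithin 0 (Ioi 0)) (nhds 0) :=
  statement7_general a d u K₁ K₂ ha_pos hd_pos hsum hmona hmond hu_cont hu0
end

section
/- Green's formula for the degenerate operator: if u ∈ H²_{1/σ}(0,1) and v ∈ H¹_{1/σ}(0,1), then ∫₀¹ (Au)(x) v(x) (1/σ(x)) dx = − ∫₀¹ η(x) u'(x) v'(x) dx, where Au = σ(ηu')'. -/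
open Set MeasureTheory Filter
open scoped Topology Interval

/-! Write `φ = η u'` for the flux, so that `A u · v / σ = φ' v`. Since `b/a ∈ L¹`, `η` is bounded,
hence `φ ∈ L²`; with `v' ∈ L²` and `φ' v ∈ L¹` (AM–GM against the weight `σ`), the derivative
`(φ v)' = φ' v + φ v'` is integrable, so `φ v` has limits at `0` and `1` and Green's formula is
the fundamental theorem of calculus once these limits are shown to vanish. Near an endpoint `c`,
Cauchy–Schwarz and `v c = 0` give `|v x| ≤ √|x - c| ‖v'‖₂`, while `φ² ∈ L¹` forces
`|x - c| φ(x)²` to be arbitrarily small at points arbitrarily close to `c`, because `1 / |x - c|`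
is not integrable there. -/

theorem aestronglyMeasurable_restrict_of_hasDerivAt {F : Type*} [NormedAddCommGroup F]
    [NormedSpace ℝ F] [CompleteSpace F] {f f' : ℝ → F} {s : Set ℝ} (hs : MeasurableSet s)
    (hf : ∀ x ∈ s, HasDerivAt f (f' x) x) : AEStronglyMeasurable f' (volume.restrict s) :=
  (aestronglyMeasurable_deriv f _).congr <|
    (ae_restrict_iff' hs).2 <| ae_of_all _ fun x hx => (hf x hx).deriv

theorem integral_abs_le_sqrt_mul_sqrt {α : Type*} [MeasurableSpace α] {μ : Measure α}
    [IsFiniteMeasure μ] {g : α → ℝ} (hg : MemLp g 2 μ) :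
    ∫ x, |g x| ∂μ ≤ √(μ.real univ) * √(∫ x, g x ^ 2 ∂μ) := by
  have h2 : ENNReal.ofReal 2 = 2 := by norm_num
  have := integral_mul_le_Lp_mul_Lq_of_nonneg Real.HolderConjugate.two_two
    (ae_of_all _ fun x => abs_nonneg (g x)) (ae_of_all _ fun _ => zero_le_one)
    (h2 ▸ hg.abs) (h2 ▸ memLp_const (1 : ℝ))
  simpa [Real.sqrt_eq_rpow, mul_comm] using this

theorem abs_intervalIntegral_le_setIntegral_abs_s10 {f : ℝ → ℝ} {a b x y : ℝ}
    (hf : IntegrableOn f (Ioo a b)) (hx : x ∈ Icc a b) (hy : y ∈ Icc a b) :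
    |∫ t in x..y, f t| ≤ ∫ t in Ioo a b, |f t| := by
  have hsub : Ι x y ⊆ Ioc a b := by
    rw [uIoc]
    exact Ioc_subset_Ioc (le_min hx.1 hy.1) (max_le hx.2 hy.2)
  calc |∫ t in x..y, f t| ≤ ∫ t in Ι x y, |f t| :=
        intervalIntegral.norm_integral_le_integral_norm_uIoc (f := f)
    _ ≤ ∫ t in Ioc a b, |f t| :=
        setIntegral_mono_set ((integrableOn_Ioc_iff_integrableOn_Ioo).2 hf).abs
          (ae_of_all _ fun t => abs_nonneg _) hsub.eventuallyLE
    _ = ∫ t in Ioo a b, |f t| := integral_Ioc_eq_integral_Ioo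

theorem abs_sub_le_sqrt_mul_sqrt_integral_sq {f f' : ℝ → ℝ} {a b x y : ℝ}
    (hf : ContinuousOn f (Icc a b)) (hf' : ∀ t ∈ Ioo a b, HasDerivAt f (f' t) t)
    (hf'2 : IntegrableOn (fun t => f' t ^ 2) (Ioo a b)) (hx : x ∈ Icc a b) (hy : y ∈ Icc a b) :
    |f x - f y| ≤ √|x - y| * √(∫ t in Ioo a b, f' t ^ 2) := by
  wlog hyx : y ≤ x generalizing x y
  · rw [abs_sub_comm, abs_sub_comm x]
    exact this hy hx (le_of_not_ge hyx)
  have hsub : Ioo y x ⊆ Ioo a b := Ioo_subset_Ioo hy.1 hx.2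
  have hL2 : MemLp f' 2 (volume.restrict (Ioo a b)) :=
    (memLp_two_iff_integrable_sq
      (aestronglyMeasurable_restrict_of_hasDerivAt measurableSet_Ioo hf')).2 hf'2
  have hint : IntegrableOn f' (Ioo y x) :=
    IntegrableOn.mono_set (hL2.integrable one_le_two) hsub
  have hftc : ∫ t in y..x, f' t = f x - f y :=
    intervalIntegral.integral_eq_sub_of_hasDerivAt_of_le hyx
      (hf.mono (Icc_subset_Icc hy.1 hx.2)) (fun t ht => hf' t (hsub ht))
      ((intervalIntegrable_iff_integrableOn_Ioo_of_le hyx).2 hint)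
  calc |f x - f y| = |∫ t in y..x, f' t| := by rw [hftc]
    _ ≤ ∫ t in Ioo y x, |f' t| :=
        abs_intervalIntegral_le_setIntegral_abs_s10 hint (left_mem_Icc.2 hyx) (right_mem_Icc.2 hyx)
    _ ≤ √(volume.real (Ioo y x)) * √(∫ t in Ioo y x, f' t ^ 2) := by
        simpa only [measureReal_restrict_apply_univ] using
          integral_abs_le_sqrt_mul_sqrt (hL2.mono_measure (Measure.restrict_mono hsub le_rfl))
    _ ≤ √|x - y| * √(∫ t in Ioo a b, f' t ^ 2) := by
        rw [Real.volume_real_Ioo_of_le hyx, abs_of_nonneg (sub_nonneg.2 hyx)]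
        exact mul_le_mul_of_nonneg_left (Real.sqrt_le_sqrt <| setIntegral_mono_set hf'2
          (ae_of_all _ fun t => sq_nonneg _) hsub.eventuallyLE) (Real.sqrt_nonneg _)

theorem integrable_mul_of_weighted_sq {α : Type*} [MeasurableSpace α] {μ : Measure α}
    {f g ρ : α → ℝ} (hρ : ∀ᵐ x ∂μ, 0 < ρ x)
    (hfg : AEStronglyMeasurable (fun x => f x * g x) μ)
    (hf : Integrable (fun x => (ρ x * f x) ^ 2 / ρ x) μ)
    (hg : Integrable (fun x => g x ^ 2 / ρ x) μ) :
    Integrable (fun x => f x * g x) μ := by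
  refine ((hf.add hg).div_const 2).mono' hfg ?_
  filter_upwards [hρ] with x hx
  rw [Real.norm_eq_abs, Pi.add_apply, ← add_div, div_div, le_div_iff₀ (by positivity),
    abs_mul]
  have hf_abs : (ρ x * f x) ^ 2 = (ρ x * |f x|) ^ 2 := by rw [mul_pow, mul_pow, sq_abs]
  nlinarith [sq_nonneg (ρ x * |f x| - |g x|), sq_abs (g x)]

theorem exists_mem_Ioo_abs_sub_mul_abs_lt {h : ℝ → ℝ} {a b c ε : ℝ} (hab : a < b)
    (hc : c ∈ Icc a b) (hh : IntegrableOn h (Ioo a b)) (hε : 0 < ε) :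
    ∃ x ∈ Ioo a b, |x - c| * |h x| < ε := by
  by_contra! hlarge
  have hinv : IntegrableOn (fun x => (x - c)⁻¹) (Ioo a b) := by
    refine (hh.norm.const_mul ε⁻¹).mono' (measurable_id.sub_const c).inv.aestronglyMeasurable ?_
    refine (ae_restrict_iff' measurableSet_Ioo).2 (ae_of_all _ fun x hx => ?_)
    have hxc : 0 < |x - c| := by
      refine abs_pos.2 fun hxc => ?_
      have := hlarge x hx
      rw [hxc, abs_zero, zero_mul] at this
      exact hε.not_ge this
    rw [norm_inv, Real.norm_eq_abs, Real.norm_eq_abs, inv_le_iff_one_le_mul₀ hxc]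
    calc (1 : ℝ) ≤ ε⁻¹ * (|x - c| * |h x|) := by
          rw [le_inv_mul_iff₀ hε, mul_one]; exact hlarge x hx
      _ = ε⁻¹ * |h x| * |x - c| := by ring
  have := (intervalIntegrable_iff_integrableOn_Ioo_of_le hab.le).2 hinv
  rw [intervalIntegrable_sub_inv_iff, uIcc_of_le hab.le] at this
  exact this.elim hab.ne (· hc)

theorem frequently_abs_sub_mul_abs_lt {h : ℝ → ℝ} {a b c ε : ℝ} (hab : a < b)
    (hc : c ∈ Icc a b) (hh : IntegrableOn h (Ioo a b)) (hε : 0 < ε) :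
    ∃ᶠ x in 𝓝[Ioo a b] c, |x - c| * |h x| < ε := by
  rw [(nhdsWithin_hasBasis (nhds_basis_Ioo_pos c) _).frequently_iff]
  intro r hr
  have hsub : Ioo (max a (c - r)) (min b (c + r)) ⊆ Ioo (c - r) (c + r) ∩ Ioo a b :=
    fun x hx => ⟨⟨(le_max_right _ _).trans_lt hx.1, hx.2.trans_le (min_le_right _ _)⟩,
      ⟨(le_max_left _ _).trans_lt hx.1, hx.2.trans_le (min_le_left _ _)⟩⟩
  obtain ⟨x, hx, hlt⟩ := exists_mem_Ioo_abs_sub_mul_abs_lt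
    (max_lt (lt_min hab (by linarith [hc.1])) (lt_min (by linarith [hc.2]) (by linarith)))
    ⟨max_le hc.1 (by linarith), le_min hc.2 (by linarith)⟩
    (hh.mono_set (hsub.trans inter_subset_right)) hε
  exact ⟨x, hsub hx, hlt⟩

theorem exists_tendsto_nhdsWithin_Ioo_of_hasDerivAt {E : Type*} [NormedAddCommGroup E]
    [NormedSpace ℝ E] [CompleteSpace E] {f f' : ℝ → E} {a b c : ℝ} (hab : a < b)
    (hc : c ∈ Icc a b) (hf : ∀ x ∈ Ioo a b, HasDerivAt f (f' x) x)
    (hf' : IntegrableOn f' (Ioo a b)) : ∃ L, Tendsto f (𝓝[Ioo a b] c) (𝓝 L) := by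
  obtain ⟨x₀, hx₀⟩ := nonempty_Ioo.2 hab
  have hint : IntervalIntegrable f' volume a b :=
    (intervalIntegrable_iff_integrableOn_Ioo_of_le hab.le).2 hf'
  have hprim : ContinuousOn (fun x => ∫ t in x₀..x, f' t) (Icc a b) := by
    simpa only [uIcc_of_le hab.le] using intervalIntegral.continuousOn_primitive_interval' hint
      (by rw [uIcc_of_le hab.le]; exact Ioo_subset_Icc_self hx₀)
  refine ⟨f x₀ + ∫ t in x₀..c, f' t, ?_⟩
  refine (((hprim c hc).mono Ioo_subset_Icc_self).tendsto.const_add (f x₀)).congr'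
    (eventually_nhdsWithin_of_forall fun x hx => ?_)
  have hsub : [[x₀, x]] ⊆ Ioo a b := ordConnected_Ioo.uIcc_subset hx₀ hx
  rw [intervalIntegral.integral_eq_sub_of_hasDerivAt (fun t ht => hf t (hsub ht))
    (hf'.mono_set hsub).intervalIntegrable, add_sub_cancel]

theorem eq_zero_of_tendsto_mul_nhdsWithin_Ioo {φ v v' : ℝ → ℝ} {a b c L : ℝ} (hab : a < b)
    (hc : c ∈ Icc a b) (hv : ContinuousOn v (Icc a b))
    (hv' : ∀ x ∈ Ioo a b, HasDerivAt v (v' x) x)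
    (hv'2 : IntegrableOn (fun x => v' x ^ 2) (Ioo a b)) (hvc : v c = 0)
    (hφ2 : IntegrableOn (fun x => φ x ^ 2) (Ioo a b))
    (hL : Tendsto (fun x => φ x * v x) (𝓝[Ioo a b] c) (𝓝 L)) : L = 0 := by
  set C := √(∫ t in Ioo a b, v' t ^ 2)
  have hC : 0 ≤ C := Real.sqrt_nonneg _
  refine abs_nonpos_iff.1 (le_of_forall_pos_le_add fun ε hε => ?_)
  have hδ : 0 < (ε / (C + 1)) ^ 2 := by positivity
  refine le_of_tendsto_of_frequently hL.abs ((frequently_abs_sub_mul_abs_lt hab hc hφ2 hδ).mp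
    (eventually_nhdsWithin_of_forall fun x hx hsmall => ?_))
  have hvx : |v x| ≤ √|x - c| * C := by
    simpa only [hvc, sub_zero] using
      abs_sub_le_sqrt_mul_sqrt_integral_sq hv hv' hv'2 (Ioo_subset_Icc_self hx) hc
  have hφx : √|x - c| * |φ x| < ε / (C + 1) := by
    rw [← Real.sqrt_sq_eq_abs (φ x), ← Real.sqrt_mul (abs_nonneg _),
      ← Real.sqrt_sq (by positivity : 0 ≤ ε / (C + 1))]
    exact Real.sqrt_lt_sqrt (by positivity) (by rwa [abs_of_nonneg (sq_nonneg (φ x))] at hsmall)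
  calc |φ x * v x| ≤ |φ x| * (√|x - c| * C) := by
        rw [abs_mul]; exact mul_le_mul_of_nonneg_left hvx (abs_nonneg _)
    _ = √|x - c| * |φ x| * C := by ring
    _ ≤ ε / (C + 1) * C := mul_le_mul_of_nonneg_right hφx.le hC
    _ ≤ 0 + ε := by
        rw [zero_add, div_mul_eq_mul_div, div_le_iff₀ (by positivity)]; nlinarith

theorem integral_deriv_mul_eq_neg_integral_mul_deriv {φ φ' v v' : ℝ → ℝ} {a b : ℝ}
    (hab : a < b) (hφ : ∀ x ∈ Ioo a b, HasDerivAt φ (φ' x) x)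
    (hv : ∀ x ∈ Ioo a b, HasDerivAt v (v' x) x) (hv_cont : ContinuousOn v (Icc a b))
    (hva : v a = 0) (hvb : v b = 0) (hφ2 : IntegrableOn (fun x => φ x ^ 2) (Ioo a b))
    (hv'2 : IntegrableOn (fun x => v' x ^ 2) (Ioo a b))
    (hφ'v : IntegrableOn (fun x => φ' x * v x) (Ioo a b)) :
    ∫ x in a..b, φ' x * v x = -∫ x in a..b, φ x * v' x := by
  have hφ_meas : AEStronglyMeasurable φ (volume.restrict (Ioo a b)) :=
    ContinuousOn.aestronglyMeasurable
      (fun x hx => (hφ x hx).continuousAt.continuousWithinAt) measurableSet_Ioo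
  have hφv' : IntegrableOn (fun x => φ x * v' x) (Ioo a b) :=
    ((memLp_two_iff_integrable_sq hφ_meas).2 hφ2).integrable_mul
      ((memLp_two_iff_integrable_sq
        (aestronglyMeasurable_restrict_of_hasDerivAt measurableSet_Ioo hv)).2 hv'2)
  have hderiv : ∀ x ∈ Ioo a b,
      HasDerivAt (fun x => φ x * v x) (φ' x * v x + φ x * v' x) x :=
    fun x hx => (hφ x hx).mul (hv x hx)
  have hint {g : ℝ → ℝ} (hg : IntegrableOn g (Ioo a b)) : IntervalIntegrable g volume a b :=
    (intervalIntegrable_iff_integrableOn_Ioo_of_le hab.le).2 hg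
  have hlim : ∀ c ∈ Icc a b, v c = 0 → Tendsto (fun x => φ x * v x) (𝓝[Ioo a b] c) (𝓝 0) := by
    intro c hc hvc
    obtain ⟨L, hL⟩ := exists_tendsto_nhdsWithin_Ioo_of_hasDerivAt hab hc hderiv (hφ'v.add hφv')
    rwa [eq_zero_of_tendsto_mul_nhdsWithin_Ioo hab hc hv_cont hv hv'2 hvc hφ2 hL] at hL
  have hftc := intervalIntegral.integral_eq_sub_of_hasDerivAt_of_tendsto hab hderiv
    (hint (hφ'v.add hφv'))
    (nhdsWithin_Ioo_eq_nhdsGT hab ▸ hlim a (left_mem_Icc.2 hab.le) hva)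
    (nhdsWithin_Ioo_eq_nhdsLT hab ▸ hlim b (right_mem_Icc.2 hab.le) hvb)
  rw [intervalIntegral.integral_add (hint hφ'v) (hint hφv'), sub_self] at hftc
  exact eq_neg_of_add_eq_zero_left hftc

theorem statement10_general (a b : ℝ → ℝ)
    (ha_pos : ∀ x ∈ Ioc (0:ℝ) 1, 0 < a x)
    (hba : IntegrableOn (fun x => b x / a x) (Ioo 0 1))
    (η σ : ℝ → ℝ)
    (hη : ∀ x, η x = Real.exp (∫ s in (1/2:ℝ)..x, b s / a s))
    (hσ : ∀ x, σ x = a x / η x)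
    -- `u ∈ H²_{1/σ}(0,1)`, with `(η u')' = w`, so `A u = σ w ∈ L²_{1/σ}`
    (u' w : ℝ → ℝ)
    (hu'L2 : IntegrableOn (fun x => u' x ^ 2) (Ioo 0 1))
    (hw : ∀ x ∈ Ioo (0:ℝ) 1, HasDerivAt (fun t => η t * u' t) (w x) x)
    (hAu : IntegrableOn (fun x => (σ x * w x) ^ 2 / σ x) (Ioo 0 1))
    -- `v ∈ H¹_{1/σ}(0,1)`
    (v v' : ℝ → ℝ)
    (hv : ∀ x ∈ Ioo (0:ℝ) 1, HasDerivAt v (v' x) x)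
    (hv_cont : ContinuousOn v (Icc 0 1)) (hv0 : v 0 = 0) (hv1 : v 1 = 0)
    (hv'L2 : IntegrableOn (fun x => v' x ^ 2) (Ioo 0 1))
    (hvL2σ : IntegrableOn (fun x => v x ^ 2 / σ x) (Ioo 0 1)) :
    ∫ x in (0:ℝ)..1, (σ x * w x) * v x * (1 / σ x) =
      - ∫ x in (0:ℝ)..1, η x * u' x * v' x := by
  have hηpos : ∀ x, 0 < η x := fun x => hη x ▸ Real.exp_pos _
  set M := Real.exp (∫ t in Ioo (0:ℝ) 1, |b t / a t|)
  have hηle : ∀ x ∈ Ioo (0:ℝ) 1, η x ≤ M := fun x hx => by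
    rw [hη x]
    exact Real.exp_le_exp.2 <| (le_abs_self _).trans <| abs_intervalIntegral_le_setIntegral_abs_s10 hba
      ⟨by norm_num, by norm_num⟩ (Ioo_subset_Icc_self hx)
  have hσpos : ∀ x ∈ Ioc (0:ℝ) 1, 0 < σ x := fun x hx =>
    hσ x ▸ div_pos (ha_pos x hx) (hηpos x)
  have hflux : IntegrableOn (fun x => (η x * u' x) ^ 2) (Ioo 0 1) := by
    refine (hu'L2.const_mul (M ^ 2)).mono' ?_ ?_
    · exact ContinuousOn.aestronglyMeasurable
        (fun x hx => ((hw x hx).continuousAt.pow 2).continuousWithinAt) measurableSet_Ioo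
    · filter_upwards [ae_restrict_mem measurableSet_Ioo] with x hx
      rw [Real.norm_eq_abs, abs_of_nonneg (sq_nonneg _), mul_pow]
      exact mul_le_mul_of_nonneg_right (pow_le_pow_left₀ (hηpos x).le (hηle x hx) 2)
        (sq_nonneg _)
  have hwv : IntegrableOn (fun x => w x * v x) (Ioo 0 1) :=
    integrable_mul_of_weighted_sq
      ((ae_restrict_iff' measurableSet_Ioo).2 <| ae_of_all _ fun x hx =>
        hσpos x (Ioo_subset_Ioc_self hx))
      ((aestronglyMeasurable_restrict_of_hasDerivAt measurableSet_Ioo hw).mul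
        ((hv_cont.mono Ioo_subset_Icc_self).aestronglyMeasurable measurableSet_Ioo))
      hAu hvL2σ
  calc ∫ x in (0:ℝ)..1, (σ x * w x) * v x * (1 / σ x) = ∫ x in (0:ℝ)..1, w x * v x := by
        refine intervalIntegral.integral_congr_ae (ae_of_all _ fun x hx => ?_)
        rw [uIoc_of_le zero_le_one] at hx
        field_simp [(hσpos x hx).ne']
    _ = -∫ x in (0:ℝ)..1, η x * u' x * v' x :=
        integral_deriv_mul_eq_neg_integral_mul_deriv zero_lt_one hw hv hv_cont hv0 hv1 hflux
          hv'L2 hwv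

/-- Green's formula: if `u ∈ H²_{1/σ}(0,1)` and
`v ∈ H¹_{1/σ}(0,1)`, then `∫₀¹ (A u) v (1/σ) = − ∫₀¹ η u' v'`, where
`A u = σ (η u')'`, `η = exp ∫_{1/2}^· b/a` and `σ = a/η`. -/
theorem statement10 (a b d : ℝ → ℝ) (K₁ K₂ : ℝ)
    (ha_cont : ContinuousOn a (Icc 0 1)) (hb_cont : ContinuousOn b (Icc 0 1))
    (hd_cont : ContinuousOn d (Icc 0 1))
    (ha0 : a 0 = 0) (hd0 : d 0 = 0)
    (ha_pos : ∀ x ∈ Ioc (0:ℝ) 1, 0 < a x)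
    (hd_pos : ∀ x ∈ Ioc (0:ℝ) 1, 0 < d x)
    (hba : IntegrableOn (fun x => b x / a x) (Ioo 0 1))
    (hK₁ : K₁ ∈ Ioo (0:ℝ) 2) (hK₂ : K₂ ∈ Ioo (0:ℝ) 2) (hsum : K₁ + K₂ ≤ 2)
    (hmona : ∃ δ > 0, MonotoneOn (fun x : ℝ => x ^ K₁ / a x) (Ioo (0:ℝ) δ))
    (hmond : ∃ δ > 0, MonotoneOn (fun x : ℝ => x ^ K₂ / d x) (Ioo (0:ℝ) δ))
    (η σ : ℝ → ℝ)
    (hη : ∀ x, η x = Real.exp (∫ s in (1/2:ℝ)..x, b s / a s))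
    (hσ : ∀ x, σ x = a x / η x)
    -- `u ∈ H²_{1/σ}(0,1)`, with `(η u')' = w`, so `A u = σ w ∈ L²_{1/σ}`
    (u u' w : ℝ → ℝ)
    (hu : ∀ x ∈ Ioo (0:ℝ) 1, HasDerivAt u (u' x) x)
    (hu_cont : ContinuousOn u (Icc 0 1)) (hu0 : u 0 = 0) (hu1 : u 1 = 0)
    (hu'L2 : IntegrableOn (fun x => u' x ^ 2) (Ioo 0 1))
    (huL2σ : IntegrableOn (fun x => u x ^ 2 / σ x) (Ioo 0 1))
    (hw : ∀ x ∈ Ioo (0:ℝ) 1, HasDerivAt (fun t => η t * u' t) (w x) x)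
    (hAu : IntegrableOn (fun x => (σ x * w x) ^ 2 / σ x) (Ioo 0 1))
    -- `v ∈ H¹_{1/σ}(0,1)`
    (v v' : ℝ → ℝ)
    (hv : ∀ x ∈ Ioo (0:ℝ) 1, HasDerivAt v (v' x) x)
    (hv_cont : ContinuousOn v (Icc 0 1)) (hv0 : v 0 = 0) (hv1 : v 1 = 0)
    (hv'L2 : IntegrableOn (fun x => v' x ^ 2) (Ioo 0 1))
    (hvL2σ : IntegrableOn (fun x => v x ^ 2 / σ x) (Ioo 0 1)) :
    ∫ x in (0:ℝ)..1, (σ x * w x) * v x * (1 / σ x) =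
      - ∫ x in (0:ℝ)..1, η x * u' x * v' x :=
  statement10_general a b ha_pos hba η σ hη hσ u' w hu'L2 hw hAu v v' hv hv_cont hv0 hv1 hv'L2 hvL2σ
end
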